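/- arXiv:2502.04168 — 7 statements merged into one kernel-verified Lean document; each statement's English description precedes it below -/
import Mathlib

section
/- Every teleportation graph obtained from a directed graph by the edge-splitting construction is acyclic. Precisely: let (V, E') be a finite acyclic directed graph, let I be a finite index set, and let f, g : I → V. Form the directed graph H with vertex set the disjoint union V ⊔ {R_i : i ∈ I} ⊔ {T_i : i ∈ I} and edge set E' ∪ {(f i, T_i) : i ∈ I} ∪ {(R_i, T_i) : i ∈ I} ∪ {(R_i, g i) : i ∈ I}. Then H is acyclic, i.e. no vertex w of H satisfies (w,w) in the transitive closure of the edge relation of H. -/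
/-- Every teleportation graph obtained from a finite acyclic directed graph
`(V, E')` by adding, for each `i` in a finite index set `I`, a pre-selection vertex `R_i`
(with edges `R_i → T_i` and `R_i → g i`) and a post-selection vertex `T_i`
(with edge `f i → T_i`), is acyclic. -/
theorem teleportation_graph_acyclic {V I : Type*} [Fintype V] [Fintype I]
    (E' : V → V → Prop) (hacyc : ∀ v : V, ¬ Relation.TransGen E' v v)
    (f g : I → V) :
    ∀ w : V ⊕ (I ⊕ I),
      ¬ Relation.TransGen
        (fun x y : V ⊕ (I ⊕ I) =>
          (∃ v v' : V, E' v v' ∧ x = Sum.inl v ∧ y = Sum.inl v') ∨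
          (∃ i : I, x = Sum.inl (f i) ∧ y = Sum.inr (Sum.inr i)) ∨
          (∃ i : I, x = Sum.inr (Sum.inl i) ∧ y = Sum.inr (Sum.inr i)) ∨
          (∃ i : I, x = Sum.inr (Sum.inl i) ∧ y = Sum.inl (g i)))
        w w := by
  set R : (V ⊕ (I ⊕ I)) → (V ⊕ (I ⊕ I)) → Prop := fun x y =>
    (∃ v v' : V, E' v v' ∧ x = Sum.inl v ∧ y = Sum.inl v') ∨
    (∃ i : I, x = Sum.inl (f i) ∧ y = Sum.inr (Sum.inr i)) ∨
    (∃ i : I, x = Sum.inr (Sum.inl i) ∧ y = Sum.inr (Sum.inr i)) ∨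
    (∃ i : I, x = Sum.inr (Sum.inl i) ∧ y = Sum.inl (g i)) with hRdef
  -- T_i is a sink: no edges out of `inr (inr i)`
  have hT : ∀ x y, R x y → ∀ i : I, x ≠ Sum.inr (Sum.inr i) := by
    rintro x y (⟨v, v', _, rfl, rfl⟩ | ⟨i, rfl, rfl⟩ | ⟨i, rfl, rfl⟩ | ⟨i, rfl, rfl⟩) j <;> simp
  -- R_i is a source: no edges into `inr (inl i)`
  have hR : ∀ x y, R x y → ∀ i : I, y ≠ Sum.inr (Sum.inl i) := by
    rintro x y (⟨v, v', _, rfl, rfl⟩ | ⟨i, rfl, rfl⟩ | ⟨i, rfl, rfl⟩ | ⟨i, rfl, rfl⟩) j <;> simp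
  -- a path between vertices of V projects to a path in E'
  have hproj : ∀ x y, Relation.TransGen R x y →
      ∀ v v', x = Sum.inl v → y = Sum.inl v' → Relation.TransGen E' v v' := by
    intro x y h
    induction h using Relation.TransGen.head_induction_on with
    | single hstep =>
      rintro v v' rfl rfl
      rcases hstep with ⟨a, b, hab, ha, hb⟩ | ⟨i, _, hb⟩ | ⟨i, hx, _⟩ | ⟨i, hx, _⟩
      · cases ha; cases hb; exact Relation.TransGen.single hab
      · exact absurd hb (by simp)
      · exact absurd hx (by simp)
      · exact absurd hx (by simp)
    | head hstep htail IH =>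
      rename_i x' b
      rintro v v' rfl rfl
      rcases hstep with ⟨a, a', hab, ha, hb⟩ | ⟨i, _, hb⟩ | ⟨i, hx, _⟩ | ⟨i, hx, _⟩
      · cases ha
        exact Relation.TransGen.head hab (IH a' v' hb rfl)
      · -- next vertex is a sink T_i, but the path continues: contradiction
        obtain ⟨c, hstep2, _⟩ := Relation.TransGen.head'_iff.mp htail
        exact absurd rfl (hT _ _ (hb ▸ hstep2) i)
      · exact absurd hx (by simp)
      · exact absurd hx (by simp)
  intro w hw
  match w with
  | Sum.inl v => exact hacyc v (hproj _ _ hw v v rfl rfl)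
  | Sum.inr (Sum.inl i) =>
    cases hw with
    | single hstep => exact hR _ _ hstep i rfl
    | tail htrans hstep => exact hR _ _ hstep i rfl
  | Sum.inr (Sum.inr i) =>
    obtain ⟨c, hstep, _⟩ := Relation.TransGen.head'_iff.mp hw
    exact hT _ _ hstep i rfl
end

section
/- The success probability of a post-selected teleportation protocol cannot depend on the state being teleported. Precisely: let A, B be nonempty finite types, T ∈ Matrix (A × B) (A × B) ℂ a POVM element, E ∈ Matrix (B × A) (B × A) ℂ a density matrix, and suppose q assigns to every density matrix ρ on A a real number q(ρ) ∈ (0,1] such that Φ_{T,E}(ρ) = q(ρ) • ρ. Then q is constant: q(ρ) = q(ρ') for all density matrices ρ, ρ' on A. -/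
open scoped BigOperators ComplexOrder

/-- The map `Φ_{T,E}` sending `ρ` on system `A` to the partial trace over `A` and `B`
of `T · (ρ ⊗ E)`, where `T` acts on `A ⊗ B` and `E` on `B ⊗ C` with `C ≅ A`. -/
noncomputable def teleMap {A B : Type*} [Fintype A] [Fintype B]
    (T : Matrix (A × B) (A × B) ℂ) (E : Matrix (B × A) (B × A) ℂ)
    (ρ : Matrix A A ℂ) : Matrix A A ℂ :=
  Matrix.of fun c c' => ∑ a : A, ∑ a' : A, ∑ b : B, ∑ b' : B,
    T (a, b) (a', b') * ρ a' a * E (b', c) (b, c')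

/-- A density matrix: positive semidefinite with trace one. -/
def IsDensityMatrix {A : Type*} [Fintype A] (ρ : Matrix A A ℂ) : Prop :=
  ρ.PosSemidef ∧ ρ.trace = 1

/-- A POVM element: positive semidefinite and below the identity. -/
def IsPOVMElement {A : Type*} [Fintype A] [DecidableEq A] (T : Matrix A A ℂ) : Prop :=
  T.PosSemidef ∧ (1 - T).PosSemidef

/-- `(T, E)` is a post-selected teleportation protocol with success probability `p ∈ (0,1]`. -/
def IsPSTeleportation {A B : Type*} [Fintype A] [Fintype B] [DecidableEq A] [DecidableEq B]
    (T : Matrix (A × B) (A × B) ℂ) (E : Matrix (B × A) (B × A) ℂ) (p : ℝ) : Prop :=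
  IsPOVMElement T ∧ IsDensityMatrix E ∧ 0 < p ∧ p ≤ 1 ∧
    ∀ ρ : Matrix A A ℂ, IsDensityMatrix ρ → teleMap T E ρ = (p : ℂ) • ρ


lemma teleMap_convex {A B : Type*} [Fintype A] [Fintype B]
    (T : Matrix (A × B) (A × B) ℂ) (E : Matrix (B × A) (B × A) ℂ)
    (ρ ρ' : Matrix A A ℂ) (x : ℂ) :
    teleMap T E (x • ρ + x • ρ') = x • teleMap T E ρ + x • teleMap T E ρ' := by
  ext c c'
  simp only [teleMap, Matrix.of_apply, Matrix.add_apply, Matrix.smul_apply, smul_eq_mul,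
    Finset.mul_sum, ← Finset.sum_add_distrib]
  apply Finset.sum_congr rfl; intros; apply Finset.sum_congr rfl; intros
  apply Finset.sum_congr rfl; intros; apply Finset.sum_congr rfl; intros
  ring

lemma smul_psd {n : Type*} [Fintype n] {M : Matrix n n ℂ} (h : M.PosSemidef) {r : ℂ}
    (hr : 0 ≤ r) : (r • M).PosSemidef := by
  have him : r.im = 0 := by
    have := (Complex.le_def.mp hr).2
    simpa using this.symm
  constructor
  · unfold Matrix.IsHermitian
    rw [Matrix.conjTranspose_smul, h.1]
    congr 1
    simp [Complex.star_def, Complex.conj_eq_iff_im, him]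
  · exact (h.smul hr).2

/-- the success probability of a post-selected teleportation protocol
cannot depend on the state being teleported. -/
theorem teleportation_success_prob_independent_of_state
    {A B : Type*} [Fintype A] [Fintype B] [DecidableEq A] [DecidableEq B]
    [Nonempty A] [Nonempty B]
    (T : Matrix (A × B) (A × B) ℂ) (E : Matrix (B × A) (B × A) ℂ)
    (hT : IsPOVMElement T) (hE : IsDensityMatrix E)
    (q : Matrix A A ℂ → ℝ)
    (hq : ∀ ρ : Matrix A A ℂ, IsDensityMatrix ρ → 0 < q ρ ∧ q ρ ≤ 1)
    (htele : ∀ ρ : Matrix A A ℂ, IsDensityMatrix ρ → teleMap T E ρ = ((q ρ : ℝ) : ℂ) • ρ) :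
    ∀ ρ ρ' : Matrix A A ℂ, IsDensityMatrix ρ → IsDensityMatrix ρ' → q ρ = q ρ' := by
  intro ρ ρ' hρ hρ'
  by_cases heq : ρ = ρ'
  · rw [heq]
  have hhalf : (0 : ℂ) ≤ (1/2 : ℂ) := by
    rw [Complex.le_def]
    norm_num
  set σ : Matrix A A ℂ := (1/2 : ℂ) • ρ + (1/2 : ℂ) • ρ' with hσdef
  have hσ : IsDensityMatrix σ := by
    refine ⟨(smul_psd hρ.1 hhalf).add (smul_psd hρ'.1 hhalf), ?_⟩
    rw [hσdef, Matrix.trace_add, Matrix.trace_smul, Matrix.trace_smul, hρ.2, hρ'.2]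
    norm_num [smul_eq_mul]
  have key : ((q ρ : ℂ) - q σ) • ρ = ((q σ : ℂ) - q ρ') • ρ' := by
    have h3 := htele σ hσ
    rw [hσdef, teleMap_convex, htele ρ hρ, htele ρ' hρ'] at h3
    linear_combination (norm := module) (2 : ℂ) • h3
  have htr : (q ρ : ℂ) - q σ = (q σ : ℂ) - q ρ' := by
    have := congrArg Matrix.trace key
    rwa [Matrix.trace_smul, Matrix.trace_smul, hρ.2, hρ'.2, smul_eq_mul, smul_eq_mul,
      mul_one, mul_one] at this
  have hzero : ((q ρ : ℂ) - q σ) = 0 := by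
    have h0 : ((q ρ : ℂ) - q σ) • (ρ - ρ') = 0 := by
      rw [smul_sub, key, htr, sub_self]
    rcases smul_eq_zero.mp h0 with h | h
    · exact h
    · exact absurd (sub_eq_zero.mp h) heq
  have h5 : (q ρ : ℂ) = q σ := sub_eq_zero.mp hzero
  have h6 : (q σ : ℂ) = q ρ' := sub_eq_zero.mp (htr ▸ hzero)
  exact_mod_cast h5.trans h6
end

section
/- Any post-selected teleportation protocol requires the intermediate system to be at least as large as the teleported system: if (T,E) is a post-selected teleportation protocol with success probability p ∈ (0,1] on finite types A (input/output) and B (intermediate), then the cardinality of B is at least the cardinality of A. -/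
open scoped BigOperators ComplexOrder

/-! ### Auxiliary machinery -/

/-- Outer product matrix `v ⊗ v†`. -/
noncomputable def outerM {A : Type*} (v : A → ℂ) : Matrix A A ℂ :=
  Matrix.of fun k l => v k * star (v l)

lemma outerM_posSemidef {A : Type*} [Fintype A] (v : A → ℂ) : (outerM v).PosSemidef := by
  rw [Matrix.posSemidef_iff_dotProduct_mulVec]
  constructor
  · ext k l
    simp [outerM, Matrix.conjTranspose_apply, mul_comm]
  · intro x
    have h1 : dotProduct (star x) ((outerM v).mulVec x) =
        star (dotProduct (star v) x) * (dotProduct (star v) x) := by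
      simp only [dotProduct, Matrix.mulVec, outerM, Matrix.of_apply, Pi.star_apply,
        star_sum, star_mul', star_star, Finset.mul_sum, Finset.sum_mul]
      rw [Finset.sum_comm]
      congr 1; ext k; congr 1; ext l; ring
    rw [h1]
    exact star_mul_self_nonneg _

lemma outerM_smul {A : Type*} (c : ℂ) (v : A → ℂ) :
    outerM (c • v) = (c * star c) • outerM v := by
  ext k l
  simp [outerM, star_mul']
  ring

/-- The vector `e_i + z e_j`. -/
noncomputable def bvec {A : Type*} [DecidableEq A] (i j : A) (z : ℂ) : A → ℂ :=
  fun k => if k = i then 1 else if k = j then z else 0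

/-- The vector `(e_i + z e_j)/√2`. -/
noncomputable def dvec {A : Type*} [DecidableEq A] (i j : A) (z : ℂ) : A → ℂ :=
  ((Real.sqrt 2 : ℂ))⁻¹ • bvec i j z

noncomputable def dmat {A : Type*} [DecidableEq A] (i j : A) (z : ℂ) : Matrix A A ℂ :=
  outerM (dvec i j z)

lemma dmat_eq {A : Type*} [DecidableEq A] (i j : A) (z : ℂ) :
    dmat i j z = (2 : ℂ)⁻¹ • outerM (bvec i j z) := by
  rw [dmat, dvec, outerM_smul]
  congr 1
  have h2 : ((Real.sqrt 2 : ℝ) : ℂ) ≠ 0 := by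
    simp [Real.sqrt_eq_zero']
  rw [star_inv₀]
  have : star ((Real.sqrt 2 : ℝ) : ℂ) = ((Real.sqrt 2 : ℝ) : ℂ) := by
    simp [Complex.star_def, Complex.conj_ofReal]
  rw [this, ← mul_inv]
  congr 1
  rw [← Complex.ofReal_mul]
  norm_num [Real.mul_self_sqrt]

lemma dmat_density {A : Type*} [Fintype A] [DecidableEq A] {i j : A} (hij : i ≠ j) {z : ℂ}
    (hz : z * star z = 1) : IsDensityMatrix (dmat i j z) := by
  refine ⟨outerM_posSemidef _, ?_⟩
  rw [dmat_eq, Matrix.trace_smul]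
  have : (outerM (bvec i j z) : Matrix A A ℂ).trace = 2 := by
    rw [Matrix.trace]
    have hterm : ∀ k : A, (outerM (bvec i j z)).diag k =
        (if k = i then 1 else 0) + (if k = j then z * star z else 0) := by
      intro k
      rcases eq_or_ne k i with rfl | hki
      · simp [outerM, bvec, hij, Ne.symm hij]
      · rcases eq_or_ne k j with rfl | hkj
        · simp [outerM, bvec, hij, Ne.symm hij, hki]
        · simp [outerM, bvec, hki, hkj]
    rw [Finset.sum_congr rfl fun k _ => hterm k, Finset.sum_add_distrib]
    simp only [Finset.sum_ite_eq', Finset.mem_univ, if_true]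
    rw [show z * star z = 1 from hz]
    norm_num
  rw [this]
  norm_num

lemma diag_density {A : Type*} [Fintype A] [DecidableEq A] (i : A) :
    IsDensityMatrix (Matrix.single i i (1 : ℂ)) := by
  have he : Matrix.single i i (1 : ℂ) = outerM (Pi.single i 1) := by
    ext k l
    simp [outerM, Matrix.single, Pi.single_apply, eq_comm]
    aesop
  constructor
  · rw [he]; exact outerM_posSemidef _
  · simp [Matrix.trace, Matrix.diag, Matrix.single]

lemma outerM_bvec_apply {A : Type*} [DecidableEq A] (i j : A) (z : ℂ) (k l : A) :
    outerM (bvec i j z) k l =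
      (if k = i then 1 else if k = j then z else 0) *
        (if l = i then 1 else if l = j then star z else 0) := by
  simp only [outerM, Matrix.of_apply, bvec]
  congr 1
  split_ifs <;> simp

/-- The key combination: `E_{ij}` as a linear combination of four density matrices. -/
lemma stdBasis_combination {A : Type*} [Fintype A] [DecidableEq A] {i j : A} (hij : i ≠ j) :
    Matrix.single i j (1 : ℂ) =
      (2:ℂ)⁻¹ • dmat i j 1 - (2:ℂ)⁻¹ • dmat i j (-1)
        + (Complex.I/2) • dmat i j Complex.I - (Complex.I/2) • dmat i j (-Complex.I) := by
  simp only [dmat_eq]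
  ext k l
  simp only [Matrix.sub_apply, Matrix.add_apply, Matrix.smul_apply, smul_eq_mul,
    outerM_bvec_apply, Matrix.single, Matrix.of_apply, star_one, star_neg,
    Complex.star_def, Complex.conj_I, map_one]
  by_cases hki : k = i <;> by_cases hkj : k = j <;> by_cases hli : l = i <;>
    by_cases hlj : l = j <;>
    simp only [hki, hkj, hli, hlj, if_true, if_false] <;>
    simp_all [hij, Ne.symm hij, ne_comm] <;> ring_nf <;>
    try (simp [Complex.I_sq]; try ring)

/-- Density matrices span all matrices. -/
lemma span_density_eq_top {A : Type*} [Fintype A] [DecidableEq A] :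
    Submodule.span ℂ {ρ : Matrix A A ℂ | IsDensityMatrix ρ} = ⊤ := by
  rw [eq_top_iff]
  intro M _
  rw [Matrix.matrix_eq_sum_single M]
  refine Submodule.sum_mem _ fun i _ => Submodule.sum_mem _ fun j _ => ?_
  have h1 : Matrix.single i j (M i j) = (M i j) • Matrix.single i j (1:ℂ) := by
    rw [Matrix.smul_single, smul_eq_mul, mul_one]
  rw [h1]
  refine Submodule.smul_mem _ _ ?_
  rcases eq_or_ne i j with rfl | hij
  · exact Submodule.subset_span (diag_density i)
  · rw [stdBasis_combination hij]
    have d1 := dmat_density (A := A) hij (z := 1) (by simp)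
    have d2 := dmat_density (A := A) hij (z := -1) (by simp)
    have d3 := dmat_density (A := A) hij (z := Complex.I) (by simp [Complex.star_def])
    have d4 := dmat_density (A := A) hij (z := -Complex.I) (by simp [Complex.star_def])
    exact sub_mem
      (add_mem
        (sub_mem (Submodule.smul_mem _ _ (Submodule.subset_span d1))
          (Submodule.smul_mem _ _ (Submodule.subset_span d2)))
        (Submodule.smul_mem _ _ (Submodule.subset_span d3)))
      (Submodule.smul_mem _ _ (Submodule.subset_span d4))

/-- `teleMap` as a linear map in `ρ`. -/
noncomputable def teleLin {A B : Type*} [Fintype A] [Fintype B]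
    (T : Matrix (A × B) (A × B) ℂ) (E : Matrix (B × A) (B × A) ℂ) :
    Matrix A A ℂ →ₗ[ℂ] Matrix A A ℂ where
  toFun := teleMap T E
  map_add' ρ σ := by
    ext c c'
    simp [teleMap, Matrix.add_apply, mul_add, add_mul, Finset.sum_add_distrib]
  map_smul' r ρ := by
    ext c c'
    simp only [teleMap, Matrix.of_apply, Matrix.smul_apply, smul_eq_mul, RingHom.id_apply,
      Finset.mul_sum]
    refine Finset.sum_congr rfl fun a _ => Finset.sum_congr rfl fun a' _ =>
      Finset.sum_congr rfl fun b _ => Finset.sum_congr rfl fun b' _ => by ring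

lemma sum_swap4 {α β γ δ : Type*} [Fintype α] [Fintype β] [Fintype γ] [Fintype δ]
    (f : α → β → γ → δ → ℂ) :
    ∑ a : α, ∑ b : β, ∑ c : γ, ∑ d : δ, f a b c d
      = ∑ c : γ, ∑ d : δ, ∑ a : α, ∑ b : β, f a b c d :=
  calc ∑ a : α, ∑ b : β, ∑ c : γ, ∑ d : δ, f a b c d
      = ∑ a : α, ∑ c : γ, ∑ b : β, ∑ d : δ, f a b c d :=
        Finset.sum_congr rfl fun _ _ => Finset.sum_comm
    _ = ∑ c : γ, ∑ a : α, ∑ b : β, ∑ d : δ, f a b c d := Finset.sum_comm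
    _ = ∑ c : γ, ∑ a : α, ∑ d : δ, ∑ b : β, f a b c d :=
        Finset.sum_congr rfl fun _ _ => Finset.sum_congr rfl fun _ _ => Finset.sum_comm
    _ = ∑ c : γ, ∑ d : δ, ∑ a : α, ∑ b : β, f a b c d :=
        Finset.sum_congr rfl fun _ _ => Finset.sum_comm

/-- a post-selected teleportation protocol requires the intermediate
system `B` to be at least as large as the teleported system `A`. -/
theorem teleportation_intermediate_dim_ge
    {A B : Type*} [Fintype A] [Fintype B] [DecidableEq A] [DecidableEq B]
    [Nonempty A] [Nonempty B]
    (T : Matrix (A × B) (A × B) ℂ) (E : Matrix (B × A) (B × A) ℂ) (p : ℝ)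
    (h : IsPSTeleportation T E p) :
    Fintype.card A ≤ Fintype.card B := by
  obtain ⟨-, -, hp0, -, hmap⟩ := h
  -- extend the identity `teleMap T E ρ = p • ρ` to all matrices by linearity
  have hall : ∀ M : Matrix A A ℂ, teleMap T E M = (p : ℂ) • M := by
    set L : Matrix A A ℂ →ₗ[ℂ] Matrix A A ℂ :=
      teleLin T E - (p : ℂ) • LinearMap.id with hL
    have hker : Submodule.span ℂ {ρ : Matrix A A ℂ | IsDensityMatrix ρ} ≤ LinearMap.ker L := by
      rw [Submodule.span_le]
      intro ρ hρ
      simp only [SetLike.mem_coe, LinearMap.mem_ker, hL, LinearMap.sub_apply,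
        LinearMap.smul_apply, LinearMap.id_apply]
      show teleMap T E ρ - (p : ℂ) • ρ = 0
      rw [hmap ρ hρ, sub_self]
    rw [span_density_eq_top, top_le_iff] at hker
    intro M
    have hLM : L M = 0 := by rw [← LinearMap.mem_ker, hker]; trivial
    have h2 : teleMap T E M - (p : ℂ) • M = 0 := hLM
    exact sub_eq_zero.mp h2
  -- the image of `teleMap` lies in the span of `|B|²` fixed matrices
  set g : B × B → Matrix A A ℂ :=
    fun bb => Matrix.of fun c c' => E (bb.2, c) (bb.1, c') with hg
  have hmem : ∀ M : Matrix A A ℂ,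
      teleMap T E M ∈ Submodule.span ℂ (Set.range g) := by
    intro M
    have hrepr : teleMap T E M =
        ∑ bb : B × B, (∑ a : A, ∑ a' : A, T (a, bb.1) (a', bb.2) * M a' a) • g bb := by
      ext c c'
      rw [Matrix.sum_apply]
      simp only [Matrix.smul_apply, smul_eq_mul, hg, Matrix.of_apply, teleMap]
      rw [Fintype.sum_prod_type]
      rw [sum_swap4 (f := fun a a' b b' => T (a, b) (a', b') * M a' a * E (b', c) (b, c'))]
      refine Finset.sum_congr rfl fun b _ => Finset.sum_congr rfl fun b' _ => ?_
      rw [Finset.sum_mul]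
      refine Finset.sum_congr rfl fun a _ => ?_
      rw [Finset.sum_mul]
    rw [hrepr]
    exact Submodule.sum_mem _ fun bb _ =>
      Submodule.smul_mem _ _ (Submodule.subset_span ⟨bb, rfl⟩)
  -- hence the span is everything
  have hspan : Submodule.span ℂ (Set.range g) = ⊤ := by
    rw [eq_top_iff]
    intro M _
    have hpne : (p : ℂ) ≠ 0 := by
      simp only [ne_eq, Complex.ofReal_eq_zero]
      exact ne_of_gt hp0
    have : M = (p : ℂ)⁻¹ • teleMap T E M := by
      rw [hall M, smul_smul, inv_mul_cancel₀ hpne, one_smul]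
    rw [this]
    exact Submodule.smul_mem _ _ (hmem M)
  -- dimension count
  have hdim : Module.finrank ℂ (Matrix A A ℂ) ≤ Fintype.card (B × B) := by
    rw [← finrank_top ℂ (Matrix A A ℂ), ← hspan]
    exact finrank_range_le_card g
  rw [Module.finrank_matrix, Module.finrank_self, mul_one, Fintype.card_prod] at hdim
  by_contra hc
  push_neg at hc
  exact absurd hdim (not_le.mpr (Nat.mul_self_lt_mul_self hc))
end

section
/- Maximal teleportation probability: if (T,E) is a post-selected teleportation protocol on finite types A (input/output) and B (intermediate) with success probability p ∈ (0,1], then p ≤ 1/|A|². -/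
open scoped BigOperators ComplexOrder Matrix

/-! ### Auxiliary lemmas -/

/-- Rank-one outer product matrix `|v⟩⟨v|`. -/
noncomputable def outerC {A : Type*} (v : A → ℂ) : Matrix A A ℂ :=
  Matrix.of fun a b => v a * star (v b)

lemma outerC_posSemidef {A : Type*} [Fintype A] (v : A → ℂ) :
    (outerC v).PosSemidef := by
  refine Matrix.PosSemidef.of_dotProduct_mulVec_nonneg ?_ ?_
  · ext a b
    simp [outerC, Matrix.conjTranspose_apply, mul_comm]
  · intro x
    have hz : dotProduct (star x) ((outerC v).mulVec x)
        = star (∑ b, star (v b) * x b) * (∑ b, star (v b) * x b) := by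
      simp only [dotProduct, Matrix.mulVec, outerC, Matrix.of_apply,
        star_sum, star_mul, star_star, Finset.sum_mul, Finset.mul_sum, Pi.star_apply]
      rw [Finset.sum_comm]
      exact Finset.sum_congr rfl fun a _ => Finset.sum_congr rfl fun b _ => by ring
    rw [hz]
    exact star_mul_self_nonneg _

lemma outerC_trace {A : Type*} [Fintype A] (v : A → ℂ) :
    (outerC v).trace = ∑ a, v a * star (v a) := by
  simp [Matrix.trace, outerC, Matrix.diag]

lemma psd_trace_nonneg {A : Type*} [Fintype A] {M : Matrix A A ℂ}
    (hM : M.PosSemidef) : 0 ≤ M.trace := by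
  classical
  refine Finset.sum_nonneg fun i _ => ?_
  have := hM.dotProduct_mulVec_nonneg (Pi.single i 1)
  simpa [dotProduct, Matrix.mulVec_single, Pi.single_apply, Finset.sum_ite_eq,
    dotProduct_single] using this

lemma psd_trace_mul_nonneg {A : Type*} [Fintype A] {M N : Matrix A A ℂ}
    (hM : M.PosSemidef) (hN : N.PosSemidef) : 0 ≤ (M * N).trace := by
  classical
  obtain ⟨B, rfl⟩ : ∃ B : Matrix A A ℂ, N = Bᴴ * B := by
    open scoped MatrixOrder in
    have hN0 : 0 ≤ N := Matrix.nonneg_iff_posSemidef.mpr hN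
    exact ⟨CFC.sqrt N, by
      rw [← Matrix.star_eq_conjTranspose, (CFC.sqrt_nonneg N).isSelfAdjoint.star_eq, CFC.sqrt_mul_sqrt_self N hN0]⟩
  rw [← Matrix.mul_assoc, Matrix.trace_mul_cycle]
  exact psd_trace_nonneg (hM.mul_mul_conjTranspose_same B)

section TeleMapLemmas

variable {A B : Type*} [Fintype A] [Fintype B]
  (T : Matrix (A × B) (A × B) ℂ) (E : Matrix (B × A) (B × A) ℂ)

lemma teleMap_add (ρ σ : Matrix A A ℂ) :
    teleMap T E (ρ + σ) = teleMap T E ρ + teleMap T E σ := by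
  ext c c'
  simp only [teleMap, Matrix.of_apply, Matrix.add_apply, ← Finset.sum_add_distrib]
  exact Finset.sum_congr rfl fun a _ => Finset.sum_congr rfl fun a' _ =>
    Finset.sum_congr rfl fun b _ => Finset.sum_congr rfl fun b' _ => by ring

lemma teleMap_smul (z : ℂ) (ρ : Matrix A A ℂ) :
    teleMap T E (z • ρ) = z • teleMap T E ρ := by
  ext c c'
  simp only [teleMap, Matrix.of_apply, Matrix.smul_apply, smul_eq_mul, Finset.mul_sum]
  exact Finset.sum_congr rfl fun a _ => Finset.sum_congr rfl fun a' _ =>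
    Finset.sum_congr rfl fun b _ => Finset.sum_congr rfl fun b' _ => by ring

lemma teleMap_sub (ρ σ : Matrix A A ℂ) :
    teleMap T E (ρ - σ) = teleMap T E ρ - teleMap T E σ := by
  have := teleMap_add T E (ρ - σ) σ
  simp only [sub_add_cancel] at this
  rw [this]; abel

end TeleMapLemmas

section Outer

variable {A B : Type*} [Fintype A] [Fintype B]
  {T : Matrix (A × B) (A × B) ℂ} {E : Matrix (B × A) (B × A) ℂ} {p : ℝ}

lemma teleMap_outer
    (hΦ : ∀ ρ : Matrix A A ℂ, IsDensityMatrix ρ → teleMap T E ρ = (p : ℂ) • ρ)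
    (v : A → ℂ) : teleMap T E (outerC v) = (p : ℂ) • outerC v := by
  classical
  by_cases hv : v = 0
  · have h0 : outerC v = (0 : ℂ) • (0 : Matrix A A ℂ) := by
      ext a b; simp [outerC, hv]
    rw [h0, teleMap_smul]; simp
  · set t : ℝ := ∑ a, Complex.normSq (v a) with ht
    have htpos : 0 < t := by
      obtain ⟨a, ha⟩ : ∃ a, v a ≠ 0 := by
        by_contra hc; push_neg at hc; exact hv (funext hc)
      exact Finset.sum_pos' (fun a _ => Complex.normSq_nonneg _)
        ⟨a, Finset.mem_univ a, Complex.normSq_pos.mpr ha⟩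
    set w : A → ℂ := fun a => ((Real.sqrt t)⁻¹ : ℂ) * v a with hw
    have h2 : ((Real.sqrt t : ℂ))⁻¹ * ((Real.sqrt t : ℂ))⁻¹ = ((t:ℂ))⁻¹ := by
      rw [← mul_inv]; norm_cast; rw [Real.mul_self_sqrt htpos.le]
    have houter : outerC w = ((t:ℂ))⁻¹ • outerC v := by
      ext a b
      simp only [outerC, Matrix.of_apply, Matrix.smul_apply, smul_eq_mul, hw,
        star_mul, Complex.star_def, Complex.conj_ofReal, map_inv₀]
      linear_combination (v a * (starRingEnd ℂ) (v b)) * h2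
    have hstep : ∀ a, w a * star (w a)
        = ((t:ℂ))⁻¹ * ((Complex.normSq (v a) : ℝ) : ℂ) := by
      intro a
      have h3 : v a * (starRingEnd ℂ) (v a) = ((Complex.normSq (v a) : ℝ) : ℂ) :=
        Complex.mul_conj _
      simp only [hw, star_mul, Complex.star_def, map_inv₀, Complex.conj_ofReal]
      linear_combination (v a * (starRingEnd ℂ) (v a)) * h2 + ((t:ℂ))⁻¹ * h3
    have hdens : IsDensityMatrix (outerC w) := by
      refine ⟨outerC_posSemidef w, ?_⟩
      rw [outerC_trace, Finset.sum_congr rfl fun a _ => hstep a, ← Finset.mul_sum,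
        ← Complex.ofReal_sum, ← ht]
      exact inv_mul_cancel₀ (by exact_mod_cast htpos.ne')
    have hkey := hΦ _ hdens
    rw [houter, teleMap_smul, smul_comm ((p:ℂ))] at hkey
    have hinv : ((t:ℂ))⁻¹ ≠ 0 := by
      simp only [ne_eq, inv_eq_zero]
      exact_mod_cast htpos.ne'
    exact smul_right_injective _ hinv hkey

end Outer

section StdBasis

variable {A : Type*} [DecidableEq A]

lemma stdBasis_diag (i : A) :
    Matrix.single i i (1:ℂ) = outerC (fun a => if i = a then 1 else 0) := by
  ext a b
  simp only [outerC, Matrix.of_apply, Matrix.single,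
    apply_ite star, star_one, star_zero]
  by_cases ha : i = a <;> by_cases hb : i = b <;> simp [ha, hb]

lemma stdBasis_decomp (i j : A) (hij : i ≠ j) :
    Matrix.single i j (1:ℂ)
      = (2:ℂ)⁻¹ • (outerC (fun a => (if i = a then 1 else 0) + (if j = a then 1 else 0))
          + Complex.I • outerC (fun a => (if i = a then 1 else 0) + Complex.I * (if j = a then 1 else 0))
          - (1 + Complex.I) • outerC (fun a => if i = a then 1 else 0)
          - (1 + Complex.I) • outerC (fun a => if j = a then 1 else 0)) := by
  ext a b
  simp only [outerC, Matrix.of_apply, Matrix.single, Matrix.smul_apply,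
    Matrix.add_apply, Matrix.sub_apply, smul_eq_mul, star_add, star_mul,
    apply_ite star, star_one, star_zero, Complex.star_def, Complex.conj_I]
  by_cases h1 : i = a <;> by_cases h2 : j = a <;> by_cases h3 : i = b <;> by_cases h4 : j = b <;>
    first
      | exact absurd (h1.trans h2.symm) hij
      | exact absurd (h3.trans h4.symm) hij
      | (by_cases hab : a = b <;>
          (try simp [h1, h2, h3, h4, hab, eq_comm, hij, Complex.I_sq]) <;>
          (try ring_nf) <;>
          (try simp [pow_succ, pow_zero, one_mul, Complex.I_sq]) <;>
          (try ring_nf) <;>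
          (try exact absurd ((h1.trans hab).trans h4.symm) hij) <;>
          (try exact absurd ((h3.trans hab.symm).trans h2.symm) hij))

end StdBasis

section Entry

variable {A B : Type*} [Fintype A] [Fintype B] [DecidableEq A]
  (T : Matrix (A × B) (A × B) ℂ) (E : Matrix (B × A) (B × A) ℂ)

lemma teleMap_std_entry (i j : A) :
    teleMap T E (Matrix.single i j (1:ℂ)) i j
      = ∑ b : B, ∑ b' : B, T (j, b) (i, b') * E (b', i) (b, j) := by
  simp [teleMap, Matrix.single, ite_and, mul_ite, ite_mul, mul_one, mul_zero,
    zero_mul, one_mul, Finset.sum_ite_irrel, Finset.sum_ite_eq, Finset.sum_const_zero]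

end Entry

lemma sum_swap4_s4 {A B : Type*} [Fintype A] [Fintype B] (f : B → A → B → A → ℂ) :
    (∑ b' : B, ∑ i : A, ∑ b : B, ∑ j : A, f b' i b j)
      = ∑ i : A, ∑ j : A, ∑ b : B, ∑ b' : B, f b' i b j := by
  rw [Finset.sum_comm]
  refine Finset.sum_congr rfl fun i _ => ?_
  calc (∑ b' : B, ∑ b : B, ∑ j : A, f b' i b j)
      = ∑ b' : B, ∑ j : A, ∑ b : B, f b' i b j :=
        Finset.sum_congr rfl fun b' _ => Finset.sum_comm
    _ = ∑ j : A, ∑ b' : B, ∑ b : B, f b' i b j := Finset.sum_comm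
    _ = ∑ j : A, ∑ b : B, ∑ b' : B, f b' i b j :=
        Finset.sum_congr rfl fun j _ => Finset.sum_comm

/-- the success probability of any post-selected teleportation protocol
is at most `1 / |A|²`. -/
theorem maximal_teleportation_probability
    {A B : Type*} [Fintype A] [Fintype B] [DecidableEq A] [DecidableEq B]
    [Nonempty A] [Nonempty B]
    (T : Matrix (A × B) (A × B) ℂ) (E : Matrix (B × A) (B × A) ℂ) (p : ℝ)
    (h : IsPSTeleportation T E p) :
    p ≤ 1 / (Fintype.card A : ℝ) ^ 2 := by
  obtain ⟨hT, hE, hp0, hp1, hΦ⟩ := h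
  -- Step 1: teleMap acts as `p • ·` on all matrix units.
  have hstd : ∀ i j : A, teleMap T E (Matrix.single i j (1:ℂ))
      = (p : ℂ) • Matrix.single i j (1:ℂ) := by
    intro i j
    by_cases hij : i = j
    · subst hij
      rw [stdBasis_diag, teleMap_outer hΦ]
    · rw [stdBasis_decomp i j hij, teleMap_smul, teleMap_sub, teleMap_sub, teleMap_add,
        teleMap_smul, teleMap_smul, teleMap_smul, teleMap_outer hΦ, teleMap_outer hΦ,
        teleMap_outer hΦ, teleMap_outer hΦ]
      simp only [smul_sub, smul_add, smul_smul]
      ring_nf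
  -- Step 2: the kernel identity.
  have hkey : ∀ i j : A,
      (∑ b : B, ∑ b' : B, T (j, b) (i, b') * E (b', i) (b, j)) = (p : ℂ) := by
    intro i j
    have := congrFun (congrFun (hstd i j) i) j
    rw [teleMap_std_entry] at this
    simpa [Matrix.single] using this
  -- Step 3: the permuted matrix `S`.
  set e : (B × A) ≃ (A × B) := Equiv.prodComm B A with he
  set S : Matrix (B × A) (B × A) ℂ := (Tᵀ).submatrix e e with hS
  have hSpsd : S.PosSemidef := (hT.1.transpose).submatrix _
  have hSone : (1 - S).PosSemidef := by
    have h1 : (1 : Matrix (B × A) (B × A) ℂ) - S = ((1 - T)ᵀ).submatrix e e := by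
      ext x y
      simp [hS, Matrix.submatrix_apply, Matrix.sub_apply, Matrix.one_apply, e.injective.eq_iff]
    rw [h1]
    exact (hT.2.transpose).submatrix _
  have hEt : (Eᵀ).PosSemidef := hE.1.transpose
  -- Step 4: trace identity.
  have htrace : (S * Eᵀ).trace = ((Fintype.card A : ℂ)) ^ 2 * (p : ℂ) := by
    have expand : (S * Eᵀ).trace
        = ∑ b' : B, ∑ i : A, ∑ b : B, ∑ j : A, T (j, b) (i, b') * E (b', i) (b, j) := by
      simp only [Matrix.trace, Matrix.diag, Matrix.mul_apply, Matrix.transpose_apply,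
        Matrix.submatrix_apply, hS, he, Equiv.prodComm_apply, Prod.swap]
      rw [Fintype.sum_prod_type]
      refine Finset.sum_congr rfl fun b' _ => Finset.sum_congr rfl fun i _ => ?_
      rw [Fintype.sum_prod_type]
    rw [expand, sum_swap4_s4]
    have : ∀ i : A, ∀ j : A, (∑ b : B, ∑ b' : B, T (j, b) (i, b') * E (b', i) (b, j))
        = (p : ℂ) := hkey
    rw [Finset.sum_congr rfl fun i _ => Finset.sum_congr rfl fun j _ => this i j]
    simp [Finset.sum_const, Finset.card_univ]
    ring
  -- Step 5: the trace bound.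
  have hbound : (S * Eᵀ).trace ≤ 1 := by
    have h0 : 0 ≤ ((1 - S) * Eᵀ).trace := psd_trace_mul_nonneg hSone hEt
    have hsplit : ((1 - S) * Eᵀ).trace = Eᵀ.trace - (S * Eᵀ).trace := by
      rw [Matrix.sub_mul, Matrix.one_mul, Matrix.trace_sub]
    have hEtr : Eᵀ.trace = 1 := by rw [Matrix.trace_transpose]; exact hE.2
    rw [hsplit, hEtr] at h0
    exact sub_nonneg.mp h0
  -- Step 6: conclude.
  rw [htrace] at hbound
  have hcast : (((Fintype.card A : ℝ) ^ 2 * p : ℝ) : ℂ) ≤ ((1 : ℝ) : ℂ) := by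
    push_cast
    exact_mod_cast hbound
  rw [Complex.real_le_real] at hcast
  have hcard : (0:ℝ) < (Fintype.card A : ℝ) ^ 2 := by
    have : 0 < Fintype.card A := Fintype.card_pos
    positivity
  rw [le_div_iff₀ hcard]
  linarith [hcast]
end

section
/- A post-selected teleportation protocol correctly teleports part of a multipartite state: let (T,E) be a post-selected teleportation protocol on finite types A, B with success probability p ∈ (0,1], and let R be any nonempty finite type. Then for every matrix ρ ∈ Matrix (A × R) (A × R) ℂ, the matrix Ψ(ρ) ∈ Matrix (R × A) (R × A) ℂ defined by Ψ(ρ)((r,c),(r',c')) = Σ_{a,a',b,b'} T((a,b),(a',b')) · ρ((a',r),(a,r')) · E((b',c),(b,c')) satisfies Ψ(ρ)((r,c),(r',c')) = p · ρ((c,r),(c',r')) for all r,r' ∈ R and c,c' ∈ A; that is, the partial trace over A and B of (T ⊗ 1_{R,C})·(ρ_{AR} ⊗ E_{BC}) equals p times ρ with its A-factor transported to the output copy C ≅ A. -/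
open scoped BigOperators ComplexOrder

/-- `teleMap T E` as a linear map. -/
noncomputable def teleMapL {A B : Type*} [Fintype A] [Fintype B]
    (T : Matrix (A × B) (A × B) ℂ) (E : Matrix (B × A) (B × A) ℂ) :
    Matrix A A ℂ →ₗ[ℂ] Matrix A A ℂ where
  toFun := teleMap T E
  map_add' x y := by
    ext c c'
    simp only [teleMap, Matrix.add_apply, Matrix.of_apply, ← Finset.sum_add_distrib]
    refine Finset.sum_congr rfl fun a _ => Finset.sum_congr rfl fun a' _ =>
      Finset.sum_congr rfl fun b _ => Finset.sum_congr rfl fun b' _ => ?_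
    ring
  map_smul' m x := by
    ext c c'
    simp only [teleMap, Matrix.smul_apply, Matrix.of_apply, smul_eq_mul, RingHom.id_apply,
      Finset.mul_sum]
    refine Finset.sum_congr rfl fun a _ => Finset.sum_congr rfl fun a' _ =>
      Finset.sum_congr rfl fun b _ => Finset.sum_congr rfl fun b' _ => ?_
    ring

open Matrix in
lemma vecMulVec_posSemidef {A : Type*} [Fintype A] (v : A → ℂ) :
    (Matrix.vecMulVec v (star v)).PosSemidef := by
  rw [Matrix.posSemidef_iff_dotProduct_mulVec]
  constructor
  · ext i j
    simp [Matrix.conjTranspose_apply, Matrix.vecMulVec_apply, mul_comm]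
  · intro x
    have : star x ⬝ᵥ (Matrix.vecMulVec v (star v)) *ᵥ x
        = star (star v ⬝ᵥ x) * (star v ⬝ᵥ x) := by
      simp only [dotProduct, Matrix.mulVec, Matrix.vecMulVec_apply, Pi.star_apply,
        star_sum, star_mul', star_star, Finset.sum_mul, Finset.mul_sum]
      rw [Finset.sum_comm]
      refine Finset.sum_congr rfl fun i _ => Finset.sum_congr rfl fun j _ => ?_
      ring
    rw [this]
    exact star_mul_self_nonneg _

lemma teleMap_eq_smul_of_protocol {A B : Type*} [Fintype A] [Fintype B]
    [DecidableEq A] [DecidableEq B]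
    (T : Matrix (A × B) (A × B) ℂ) (E : Matrix (B × A) (B × A) ℂ) (p : ℝ)
    (h : IsPSTeleportation T E p) (σ : Matrix A A ℂ) :
    teleMap T E σ = (p : ℂ) • σ := by
  obtain ⟨-, -, hp, -, hρ⟩ := h
  set L : Matrix A A ℂ →ₗ[ℂ] Matrix A A ℂ :=
    teleMapL T E - (p : ℂ) • LinearMap.id with hL
  have hLρ : ∀ ρ : Matrix A A ℂ, IsDensityMatrix ρ → L ρ = 0 := by
    intro ρ hρ'
    simp only [hL, LinearMap.sub_apply, LinearMap.smul_apply, LinearMap.id_apply]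
    rw [show teleMapL T E ρ = teleMap T E ρ from rfl, hρ ρ hρ', sub_self]
  -- L vanishes on all `v ⬝ star v`
  have hLvv : ∀ v : A → ℂ, L (Matrix.vecMulVec v (star v)) = 0 := by
    intro v
    by_cases hv : v = 0
    · subst hv
      have : Matrix.vecMulVec (0 : A → ℂ) (star (0 : A → ℂ)) = 0 := by
        ext i j; simp [Matrix.vecMulVec_apply]
      rw [this, map_zero]
    · set t : ℝ := ∑ a, Complex.normSq (v a) with ht
      have htpos : 0 < t := by
        have hne : ∃ a, v a ≠ 0 := by
          by_contra hc
          push_neg at hc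
          exact hv (funext hc)
        obtain ⟨a, ha⟩ := hne
        refine Finset.sum_pos' (fun i _ => Complex.normSq_nonneg _) ⟨a, Finset.mem_univ a, ?_⟩
        exact Complex.normSq_pos.2 ha
      set w : A → ℂ := fun a => ((Real.sqrt t : ℝ) : ℂ)⁻¹ * v a with hw
      have hkey : Matrix.vecMulVec v (star v)
          = (t : ℂ) • Matrix.vecMulVec w (star w) := by
        ext i j
        simp only [Matrix.smul_apply, Matrix.vecMulVec_apply, hw, Pi.star_apply, star_mul',
          smul_eq_mul]
        have hs : (starRingEnd ℂ) (((Real.sqrt t : ℝ) : ℂ)⁻¹) = ((Real.sqrt t : ℝ) : ℂ)⁻¹ := by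
          rw [← Complex.ofReal_inv]; exact Complex.conj_ofReal _
        have h2 : ((Real.sqrt t : ℝ) : ℂ)⁻¹ * ((Real.sqrt t : ℝ) : ℂ)⁻¹ = (t : ℂ)⁻¹ := by
          rw [← mul_inv, ← Complex.ofReal_mul, Real.mul_self_sqrt htpos.le]
        have htne : (t : ℂ) ≠ 0 := Complex.ofReal_ne_zero.2 htpos.ne'
        have h3 : (t : ℂ) * (((Real.sqrt t : ℝ) : ℂ)⁻¹ * ((Real.sqrt t : ℝ) : ℂ)⁻¹) = 1 := by
          rw [h2]; exact mul_inv_cancel₀ htne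
        simp only [Complex.star_def, hs]
        linear_combination (-(v i * (starRingEnd ℂ) (v j))) * h3
      have hdens : IsDensityMatrix (Matrix.vecMulVec w (star w)) := by
        refine ⟨vecMulVec_posSemidef w, ?_⟩
        have : (Matrix.vecMulVec w (star w)).trace
            = ∑ a, w a * (starRingEnd ℂ) (w a) := by
          simp [Matrix.trace, Matrix.diag, Matrix.vecMulVec_apply]
        rw [this]
        have htne : (t : ℂ) ≠ 0 := Complex.ofReal_ne_zero.2 htpos.ne'
        have : ∀ a, w a * (starRingEnd ℂ) (w a) = (t : ℂ)⁻¹ * (Complex.normSq (v a) : ℂ) := by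
          intro a
          simp only [hw, map_mul]
          have hs : (starRingEnd ℂ) (((Real.sqrt t : ℝ) : ℂ)⁻¹) = ((Real.sqrt t : ℝ) : ℂ)⁻¹ := by
            rw [← Complex.ofReal_inv]; exact Complex.conj_ofReal _
          have h2 : ((Real.sqrt t : ℝ) : ℂ)⁻¹ * ((Real.sqrt t : ℝ) : ℂ)⁻¹ = (t : ℂ)⁻¹ := by
            rw [← mul_inv, ← Complex.ofReal_mul, Real.mul_self_sqrt htpos.le]
          have h4 : v a * (starRingEnd ℂ) (v a) = (Complex.normSq (v a) : ℂ) :=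
            Complex.mul_conj (v a)
          rw [hs]
          linear_combination (v a * (starRingEnd ℂ) (v a)) * h2 + ((t : ℂ))⁻¹ * h4
        rw [Finset.sum_congr rfl fun a _ => this a, ← Finset.mul_sum]
        rw [show (∑ a, (Complex.normSq (v a) : ℂ)) = (t : ℂ) by
          rw [ht]; push_cast; rfl]
        exact inv_mul_cancel₀ htne
      rw [hkey, map_smul, hLρ _ hdens, smul_zero]
  -- L vanishes on standard basis matrices
  have hLstd : ∀ i j : A, L (Matrix.single i j 1) = 0 := by
    intro i j
    set u : A → ℂ := Pi.single i 1 with hu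
    set w : A → ℂ := Pi.single j 1 with hww
    have hkey : (2 : ℂ) • Matrix.single i j (1 : ℂ)
        = Matrix.vecMulVec (u + w) (star (u + w))
          + Complex.I • Matrix.vecMulVec (u + Complex.I • w) (star (u + Complex.I • w))
          - (1 + Complex.I) • (Matrix.vecMulVec u (star u) + Matrix.vecMulVec w (star w)) := by
      ext a b
      simp only [Matrix.smul_apply, Matrix.sub_apply, Matrix.add_apply, Matrix.vecMulVec_apply,
        Pi.star_apply, Pi.add_apply, Pi.smul_apply, star_add, star_mul', smul_eq_mul,
        Complex.star_def]
      have hua : ∀ a', (starRingEnd ℂ) (u a') = u a' := by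
        intro a'; simp [hu, Pi.single_apply, apply_ite]
      have hwa : ∀ a', (starRingEnd ℂ) (w a') = w a' := by
        intro a'; simp [hww, Pi.single_apply, apply_ite]
      have hstd : Matrix.single i j (1 : ℂ) a b = u a * w b := by
        simp only [Matrix.single, Matrix.of_apply, hu, hww, Pi.single_apply]
        by_cases h1 : i = a <;> by_cases h2 : j = b <;> simp [h1, h2, eq_comm]
      simp only [Complex.star_def, map_mul, hua, hwa, Complex.conj_I, map_add]
      rw [hstd]
      linear_combination (u a * w b - w a * u b + Complex.I * (w a * w b)) * Complex.I_sq
    have := congrArg L hkey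
    rw [map_smul, map_sub, map_add, map_smul, map_smul, map_add] at this
    rw [hLvv, hLvv, hLvv, hLvv] at this
    simp only [smul_zero, add_zero, sub_zero, zero_add] at this
    have h2 : (2 : ℂ) ≠ 0 := two_ne_zero
    exact (smul_eq_zero.1 this).resolve_left h2
  -- hence L vanishes everywhere
  have hL0 : L σ = 0 := by
    have hexp : σ = ∑ i : A, ∑ j : A, σ i j • Matrix.single i j (1 : ℂ) := by
      conv_lhs => rw [Matrix.matrix_eq_sum_single σ]
      refine Finset.sum_congr rfl fun i _ => Finset.sum_congr rfl fun j _ => ?_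
      rw [Matrix.smul_single, smul_eq_mul, mul_one]
    rw [hexp, map_sum]
    refine Finset.sum_eq_zero fun i _ => ?_
    rw [map_sum]
    refine Finset.sum_eq_zero fun j _ => ?_
    rw [map_smul, hLstd, smul_zero]
  have hTL : teleMapL T E σ = teleMap T E σ := rfl
  have : teleMap T E σ - (p : ℂ) • σ = 0 := by
    simpa [hL, LinearMap.sub_apply, hTL] using hL0
  exact sub_eq_zero.1 this

/-- a post-selected teleportation protocol correctly teleports the
`A`-part of any multipartite state on `A × R`: the partial trace over `A` and `B`
of `(T ⊗ 1_{R,C}) · (ρ_{AR} ⊗ E_{BC})` equals `p` times `ρ` with its `A`-factor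
transported to the output copy `C ≅ A`. -/
theorem teleportation_of_part_of_multipartite_state
    {A B R : Type*} [Fintype A] [Fintype B] [Fintype R]
    [DecidableEq A] [DecidableEq B]
    [Nonempty A] [Nonempty B] [Nonempty R]
    (T : Matrix (A × B) (A × B) ℂ) (E : Matrix (B × A) (B × A) ℂ) (p : ℝ)
    (h : IsPSTeleportation T E p) :
    ∀ (ρ : Matrix (A × R) (A × R) ℂ) (r r' : R) (c c' : A),
      (∑ a : A, ∑ a' : A, ∑ b : B, ∑ b' : B,
          T (a, b) (a', b') * ρ (a', r) (a, r') * E (b', c) (b, c'))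
        = (p : ℂ) * ρ (c, r) (c', r') := by
  intro ρ r r' c c'
  have := congrFun (congrFun (teleMap_eq_smul_of_protocol T E p h
    (Matrix.of fun a' a => ρ (a', r) (a, r'))) c) c'
  simpa [teleMap, Matrix.smul_apply, smul_eq_mul] using this
end

section
/- p-separation reduces to d-separation on acyclic graphs: let G = (V,E) be a finite acyclic directed graph and let V1, V2, V3 ⊆ V be pairwise disjoint with V1 and V2 nonempty. Then (V1 ⊥ᵖ V2 | V3)_G holds if and only if (V1 ⊥ᵈ V2 | V3)_G holds. -/
variable {V : Type*}

/-- `u` is a descendant of `w`: there is a (possibly trivial) directed path from `w` to `u`. -/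
def Desc (E : V → V → Prop) (w u : V) : Prop := Relation.ReflTransGen E w u

/-- A path from `V1` to `V2`: a sequence `v 0, …, v n` of pairwise distinct vertices
(`n ≥ 1`) with `v 0 ∈ V1`, `v n ∈ V2`, and consecutive vertices joined by an edge in
either direction. -/
def IsPathBetween (E : V → V → Prop) (V1 V2 : Set V) (n : ℕ) (v : ℕ → V) : Prop :=
  1 ≤ n ∧ (∀ i j, i ≤ n → j ≤ n → v i = v j → i = j) ∧
    v 0 ∈ V1 ∧ v n ∈ V2 ∧ ∀ i, i < n → (E (v i) (v (i + 1)) ∨ E (v (i + 1)) (v i))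

/-- The path `v` is blocked by `Z` at the interior position `i`: either `v i ∈ Z` and
`v i` is a chain or fork vertex of the path, or `v i` is a collider on the path no
descendant of which lies in `Z`. -/
def BlockedAt (E : V → V → Prop) (Z : Set V) (v : ℕ → V) (i : ℕ) : Prop :=
  (v i ∈ Z ∧
    ((E (v (i - 1)) (v i) ∧ E (v i) (v (i + 1))) ∨
     (E (v (i + 1)) (v i) ∧ E (v i) (v (i - 1))) ∨
     (E (v i) (v (i - 1)) ∧ E (v i) (v (i + 1))))) ∨
  (E (v (i - 1)) (v i) ∧ E (v (i + 1)) (v i) ∧ ∀ u, Desc E (v i) u → u ∉ Z)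

/-- The path `v` (of length `n`) is blocked by `Z`. -/
def Blocked (E : V → V → Prop) (Z : Set V) (n : ℕ) (v : ℕ → V) : Prop :=
  ∃ i, 0 < i ∧ i < n ∧ BlockedAt E Z v i

/-- d-separation: every path from `V1` to `V2` is blocked by `Z`. -/
def DSep (E : V → V → Prop) (V1 V2 Z : Set V) : Prop :=
  ∀ n v, IsPathBetween E V1 V2 n v → Blocked E Z n v

/-- A directed graph is acyclic if no vertex is related to itself by the transitive
closure of the edge relation. -/
def Acyclic (E : V → V → Prop) : Prop := ∀ w, ¬ Relation.TransGen E w w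

/-- The vertex type of a teleportation graph: the original vertices, plus a
pre-selection vertex `R_e = inr (inl e)` and a post-selection vertex
`T_e = inr (inr e)` for each split edge `e`. -/
abbrev TVert (V : Type*) := V ⊕ ((V × V) ⊕ (V × V))

/-- The edge relation of the teleportation graph obtained from `E` by splitting the
edges in `S`: the unsplit edges survive, and each split edge `(a,b) ∈ S` is replaced
by the edges `a → T_{(a,b)}`, `R_{(a,b)} → T_{(a,b)}` and `R_{(a,b)} → b`. -/
def TeleEdge (E S : V → V → Prop) : TVert V → TVert V → Prop := fun x y =>
  (∃ a b, E a b ∧ ¬ S a b ∧ x = Sum.inl a ∧ y = Sum.inl b) ∨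
  (∃ a b, S a b ∧ x = Sum.inl a ∧ y = Sum.inr (Sum.inr (a, b))) ∨
  (∃ a b, S a b ∧ x = Sum.inr (Sum.inl (a, b)) ∧ y = Sum.inr (Sum.inr (a, b))) ∨
  (∃ a b, S a b ∧ x = Sum.inr (Sum.inl (a, b)) ∧ y = Sum.inl b)

/-- The post-selection vertices of the teleportation graph with split edges `S`. -/
def TelePost (S : V → V → Prop) : Set (TVert V) :=
  {x | ∃ a b, S a b ∧ x = Sum.inr (Sum.inr (a, b))}

/-- p-separation (edge-splitting definition): there exists a choice of split edges
`S ⊆ E` whose removal makes the graph acyclic, such that in the resulting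
teleportation graph `V1` and `V2` are d-separated given `V3` together with all the
post-selection vertices. -/
def PSep (E : V → V → Prop) (V1 V2 V3 : Set V) : Prop :=
  ∃ S : V → V → Prop,
    (∀ a b, S a b → E a b) ∧
    Acyclic (fun a b => E a b ∧ ¬ S a b) ∧
    DSep (TeleEdge E S) (Sum.inl '' V1) (Sum.inl '' V2)
      ((Sum.inl '' V3) ∪ TelePost S)

section AuxLemmas

variable {V : Type*}

lemma teleEdge_not_from_T {E S : V → V → Prop} {e : V × V} {y : TVert V} :
    ¬ TeleEdge E S (Sum.inr (Sum.inr e)) y := by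
  rintro (⟨a, b, _, _, h, _⟩ | ⟨a, b, _, h, _⟩ | ⟨a, b, _, h, _⟩ | ⟨a, b, _, h, _⟩) <;>
    simp_all

lemma teleEdge_not_to_R {E S : V → V → Prop} {e : V × V} {x : TVert V} :
    ¬ TeleEdge E S x (Sum.inr (Sum.inl e)) := by
  rintro (⟨a, b, _, _, _, h⟩ | ⟨a, b, _, _, h⟩ | ⟨a, b, _, _, h⟩ | ⟨a, b, _, _, h⟩) <;>
    simp_all

lemma teleEdge_inl_inl {E S : V → V → Prop} {a b : V} :
    TeleEdge E S (Sum.inl a) (Sum.inl b) ↔ E a b ∧ ¬ S a b := by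
  constructor
  · rintro (⟨a', b', h1, h2, h3, h4⟩ | ⟨a', b', _, _, h⟩ | ⟨a', b', _, h, _⟩ |
      ⟨a', b', _, h, _⟩) <;> simp_all
  · intro h
    exact Or.inl ⟨a, b, h.1, h.2, rfl, rfl⟩

lemma desc_tele {E S : V → V → Prop} {V3 : Set V} {a u : V}
    (h : Relation.ReflTransGen E a u) (hu : u ∈ V3) :
    ∃ z, Relation.ReflTransGen (TeleEdge E S) (Sum.inl a) z ∧
      z ∈ (Sum.inl '' V3 ∪ TelePost S) := by
  induction h using Relation.ReflTransGen.head_induction_on with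
  | refl => exact ⟨Sum.inl u, Relation.ReflTransGen.refl, Or.inl ⟨u, hu, rfl⟩⟩
  | head hac htail ih =>
    rename_i x c
    by_cases hS : S x c
    · exact ⟨Sum.inr (Sum.inr (x, c)),
        Relation.ReflTransGen.single (Or.inr (Or.inl ⟨x, c, hS, rfl, rfl⟩)),
        Or.inr ⟨x, c, hS, rfl⟩⟩
    · obtain ⟨z, hz1, hz2⟩ := ih
      exact ⟨z, Relation.ReflTransGen.head (Or.inl ⟨x, c, hac, hS, rfl, rfl⟩) hz1, hz2⟩

lemma tele_false {E : V → V → Prop} {x y : TVert V}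
    (h : TeleEdge E (fun _ _ => False) x y) :
    ∃ a b, E a b ∧ x = Sum.inl a ∧ y = Sum.inl b := by
  rcases h with ⟨a, b, h1, _, h3, h4⟩ | ⟨a, b, h1, _⟩ | ⟨a, b, h1, _⟩ | ⟨a, b, h1, _⟩
  · exact ⟨a, b, h1, h3, h4⟩
  all_goals exact h1.elim

lemma desc_tele_false {E : V → V → Prop} {a : V} {x : TVert V}
    (h : Relation.ReflTransGen (TeleEdge E (fun _ _ => False)) (Sum.inl a) x) :
    ∃ b, x = Sum.inl b ∧ Relation.ReflTransGen E a b := by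
  induction h with
  | refl => exact ⟨a, rfl, Relation.ReflTransGen.refl⟩
  | tail hrt hstep ih =>
    obtain ⟨b, rfl, hab⟩ := ih
    obtain ⟨a', b', hE, ha', hb'⟩ := tele_false hstep
    rw [Sum.inl.injEq] at ha'
    subst ha'
    exact ⟨b', hb', hab.tail hE⟩

end AuxLemmas
section Construction

variable {V : Type*}

/-- Step `i` of the path `v` is a split step. -/
def Spl (E S : V → V → Prop) (v : ℕ → V) (i : ℕ) : Prop :=
  (E (v i) (v (i + 1)) ∧ S (v i) (v (i + 1))) ∨
  (E (v (i + 1)) (v i) ∧ S (v (i + 1)) (v i))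

open Classical in
/-- Length contributed by step `i`. -/
noncomputable def slen (E S : V → V → Prop) (v : ℕ → V) (i : ℕ) : ℕ :=
  if Spl E S v i then 3 else 1

/-- Offset of vertex `k` in the teleportation path. -/
noncomputable def off (E S : V → V → Prop) (v : ℕ → V) : ℕ → ℕ
  | 0 => 0
  | k + 1 => off E S v k + slen E S v k

open Classical in
/-- The intermediate vertices of a split step. -/
noncomputable def mid (E : V → V → Prop) (v : ℕ → V) (i r : ℕ) : TVert V :=
  if E (v i) (v (i + 1)) then
    (if r = 1 then Sum.inr (Sum.inr (v i, v (i + 1)))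
     else Sum.inr (Sum.inl (v i, v (i + 1))))
  else
    (if r = 1 then Sum.inr (Sum.inl (v (i + 1), v i))
     else Sum.inr (Sum.inr (v (i + 1), v i)))

open Classical in
/-- The teleportation path simulating `v`. -/
noncomputable def tw (E S : V → V → Prop) (v : ℕ → V) (n p : ℕ) : TVert V :=
  let k := Nat.findGreatest (fun k => off E S v k ≤ p) n
  if p = off E S v k then Sum.inl (v k) else mid E v k (p - off E S v k)

variable {E S : V → V → Prop} {v : ℕ → V}

lemma slen_pos (i : ℕ) : 1 ≤ slen E S v i := by
  unfold slen; split <;> omega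

lemma slen_le (i : ℕ) : slen E S v i ≤ 3 := by
  unfold slen; split <;> omega

lemma slen_of_spl {i : ℕ} (h : Spl E S v i) : slen E S v i = 3 := by
  unfold slen; rw [if_pos h]

lemma slen_of_not_spl {i : ℕ} (h : ¬ Spl E S v i) : slen E S v i = 1 := by
  unfold slen; rw [if_neg h]

lemma off_strictMono : StrictMono (off E S v) := by
  apply strictMono_nat_of_lt_succ
  intro k
  have := slen_pos (E := E) (S := S) (v := v) k
  show off E S v k < off E S v k + slen E S v k
  omega

open Classical in
lemma kk_eq {n k p : ℕ} (hk : k ≤ n) (h1 : off E S v k ≤ p) (h2 : p < off E S v (k + 1)) :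
    Nat.findGreatest (fun k => off E S v k ≤ p) n = k := by
  rw [Nat.findGreatest_eq_iff]
  refine ⟨hk, fun _ => h1, fun m hm hmn hle => ?_⟩
  exact absurd (le_trans (off_strictMono.monotone hm) hle) (not_le.2 h2)

lemma tw_off {n k : ℕ} (hk : k ≤ n) : tw E S v n (off E S v k) = Sum.inl (v k) := by
  unfold tw
  rw [kk_eq hk le_rfl (off_strictMono (Nat.lt_succ_self k))]
  simp

lemma off_succ_of_spl {k : ℕ} (h : Spl E S v k) :
    off E S v (k + 1) = off E S v k + 3 := by
  show off E S v k + slen E S v k = _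
  rw [slen_of_spl h]

lemma off_succ_of_not_spl {k : ℕ} (h : ¬ Spl E S v k) :
    off E S v (k + 1) = off E S v k + 1 := by
  show off E S v k + slen E S v k = _
  rw [slen_of_not_spl h]

lemma tw_mid {n k r : ℕ} (hk : k < n) (hspl : Spl E S v k) (hr : r = 1 ∨ r = 2) :
    tw E S v n (off E S v k + r) = mid E v k r := by
  unfold tw
  have h3 : off E S v (k + 1) = off E S v k + 3 := off_succ_of_spl hspl
  rw [kk_eq (le_of_lt hk) (by omega) (by omega)]
  rw [if_neg (by omega)]
  congr 1
  omega

/-- Decoding of positions in the teleportation path. -/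
lemma decode {n p : ℕ} (hp : p ≤ off E S v n) :
    ∃ k, (k ≤ n ∧ p = off E S v k) ∨
      (k < n ∧ Spl E S v k ∧ (p = off E S v k + 1 ∨ p = off E S v k + 2)) := by
  classical
  set k := Nat.findGreatest (fun k => off E S v k ≤ p) n with hkdef
  have hkn : k ≤ n := Nat.findGreatest_le n
  have hoffk : off E S v k ≤ p := by
    rcases Nat.eq_zero_or_pos k with h0 | h0
    · rw [h0]; show off E S v 0 ≤ p; exact Nat.zero_le p
    · exact Nat.findGreatest_of_ne_zero (P := fun k => off E S v k ≤ p) (n := n)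
        hkdef.symm (by omega)
  by_cases heq : p = off E S v k
  · exact ⟨k, Or.inl ⟨hkn, heq⟩⟩
  have hklt : k < n := by
    rcases lt_or_eq_of_le hkn with h | h
    · exact h
    · exfalso; apply heq; rw [h] at hoffk ⊢; omega
  have hlt : p < off E S v (k + 1) :=
    not_le.1 (Nat.findGreatest_is_greatest (P := fun k => off E S v k ≤ p) (n := n)
      (by omega) (by omega))
  by_cases hspl : Spl E S v k
  · have h3 := off_succ_of_spl (v := v) hspl
    exact ⟨k, Or.inr ⟨hklt, hspl, by omega⟩⟩
  · have h1 := off_succ_of_not_spl (v := v) hspl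
    omega

lemma mid_ne_inl {k r : ℕ} {a : V} : mid E v k r ≠ Sum.inl a := by
  unfold mid; split <;> split <;> simp

end Construction
section StepLemmas

variable {V : Type*} {E S : V → V → Prop} {v : ℕ → V} {n : ℕ}

lemma no2 (hacyc : Acyclic E) {a b : V} (h : E a b) : ¬ E b a := fun h' =>
  hacyc a (Relation.TransGen.head h (Relation.TransGen.single h'))

lemma spl_fwd (hacyc : Acyclic E) {j : ℕ} (hspl : Spl E S v j)
    (hF : E (v j) (v (j + 1))) : S (v j) (v (j + 1)) := by
  rcases hspl with ⟨_, h⟩ | ⟨h, _⟩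
  · exact h
  · exact absurd h (no2 hacyc hF)

lemma spl_bwd (hacyc : Acyclic E) {j : ℕ} (hspl : Spl E S v j)
    (hF : ¬ E (v j) (v (j + 1))) : S (v (j + 1)) (v j) := by
  rcases hspl with ⟨h, _⟩ | ⟨_, h⟩
  · exact absurd h hF
  · exact h

/-- The right neighbour of `inl (v j)` in the teleportation path: edge directions
match those of the original step `j`. -/
lemma step_right (hacyc : Acyclic E) {j : ℕ} (hj : j < n)
    (hej : E (v j) (v (j + 1)) ∨ E (v (j + 1)) (v j)) :
    (TeleEdge E S (Sum.inl (v j)) (tw E S v n (off E S v j + 1)) ↔ E (v j) (v (j + 1))) ∧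
    (TeleEdge E S (tw E S v n (off E S v j + 1)) (Sum.inl (v j)) ↔ E (v (j + 1)) (v j)) := by
  by_cases hspl : Spl E S v j
  · have hmid := tw_mid (E := E) (S := S) (v := v) hj hspl (Or.inl rfl)
    by_cases hF : E (v j) (v (j + 1))
    · have hS := spl_fwd hacyc hspl hF
      have : mid E v j 1 = Sum.inr (Sum.inr (v j, v (j + 1))) := by
        unfold mid; rw [if_pos hF, if_pos rfl]
      rw [hmid, this]
      constructor
      · exact iff_of_true (Or.inr (Or.inl ⟨v j, v (j + 1), hS, rfl, rfl⟩)) hF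
      · exact iff_of_false teleEdge_not_from_T (no2 hacyc hF)
    · have hB : E (v (j + 1)) (v j) := hej.resolve_left hF
      have hS := spl_bwd hacyc hspl hF
      have : mid E v j 1 = Sum.inr (Sum.inl (v (j + 1), v j)) := by
        unfold mid; rw [if_neg hF, if_pos rfl]
      rw [hmid, this]
      constructor
      · exact iff_of_false teleEdge_not_to_R hF
      · exact iff_of_true (Or.inr (Or.inr (Or.inr ⟨v (j + 1), v j, hS, rfl, rfl⟩))) hB
  · have h1 : off E S v j + 1 = off E S v (j + 1) := (off_succ_of_not_spl hspl).symm
    rw [h1, tw_off (by omega)]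
    by_cases hF : E (v j) (v (j + 1))
    · have hnS : ¬ S (v j) (v (j + 1)) := fun h => hspl (Or.inl ⟨hF, h⟩)
      constructor
      · rw [teleEdge_inl_inl]
        exact ⟨fun h => h.1, fun h => ⟨h, hnS⟩⟩
      · rw [teleEdge_inl_inl]
        exact iff_of_false (fun h => no2 hacyc hF h.1) (no2 hacyc hF)
    · have hB : E (v (j + 1)) (v j) := hej.resolve_left hF
      have hnS : ¬ S (v (j + 1)) (v j) := fun h => hspl (Or.inr ⟨hB, h⟩)
      constructor
      · rw [teleEdge_inl_inl]
        exact iff_of_false (fun h => hF h.1) hF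
      · rw [teleEdge_inl_inl]
        exact ⟨fun h => h.1, fun h => ⟨h, hnS⟩⟩

/-- The left neighbour of `inl (v (j+1))` in the teleportation path: edge directions
match those of the original step `j`. -/
lemma step_left (hacyc : Acyclic E) {j : ℕ} (hj : j < n)
    (hej : E (v j) (v (j + 1)) ∨ E (v (j + 1)) (v j)) :
    (TeleEdge E S (tw E S v n (off E S v (j + 1) - 1)) (Sum.inl (v (j + 1))) ↔
      E (v j) (v (j + 1))) ∧
    (TeleEdge E S (Sum.inl (v (j + 1))) (tw E S v n (off E S v (j + 1) - 1)) ↔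
      E (v (j + 1)) (v j)) := by
  by_cases hspl : Spl E S v j
  · have h3 : off E S v (j + 1) = off E S v j + 3 := off_succ_of_spl hspl
    have h2 : off E S v (j + 1) - 1 = off E S v j + 2 := by omega
    have hmid := tw_mid (E := E) (S := S) (v := v) hj hspl (Or.inr rfl)
    rw [h2, hmid]
    by_cases hF : E (v j) (v (j + 1))
    · have hS := spl_fwd hacyc hspl hF
      have : mid E v j 2 = Sum.inr (Sum.inl (v j, v (j + 1))) := by
        unfold mid; rw [if_pos hF, if_neg (by omega)]
      rw [this]
      constructor
      · exact iff_of_true (Or.inr (Or.inr (Or.inr ⟨v j, v (j + 1), hS, rfl, rfl⟩))) hF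
      · exact iff_of_false teleEdge_not_to_R (no2 hacyc hF)
    · have hB : E (v (j + 1)) (v j) := hej.resolve_left hF
      have hS := spl_bwd hacyc hspl hF
      have : mid E v j 2 = Sum.inr (Sum.inr (v (j + 1), v j)) := by
        unfold mid; rw [if_neg hF, if_neg (by omega)]
      rw [this]
      constructor
      · exact iff_of_false teleEdge_not_from_T hF
      · exact iff_of_true (Or.inr (Or.inl ⟨v (j + 1), v j, hS, rfl, rfl⟩)) hB
  · have h1 : off E S v (j + 1) = off E S v j + 1 := off_succ_of_not_spl hspl
    have h2 : off E S v (j + 1) - 1 = off E S v j := by omega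
    rw [h2, tw_off (by omega)]
    by_cases hF : E (v j) (v (j + 1))
    · have hnS : ¬ S (v j) (v (j + 1)) := fun h => hspl (Or.inl ⟨hF, h⟩)
      constructor
      · rw [teleEdge_inl_inl]
        exact ⟨fun h => h.1, fun h => ⟨h, hnS⟩⟩
      · rw [teleEdge_inl_inl]
        exact iff_of_false (fun h => no2 hacyc hF h.1) (no2 hacyc hF)
    · have hB : E (v (j + 1)) (v j) := hej.resolve_left hF
      have hnS : ¬ S (v (j + 1)) (v j) := fun h => hspl (Or.inr ⟨hB, h⟩)
      constructor
      · rw [teleEdge_inl_inl]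
        exact iff_of_false (fun h => hF h.1) hF
      · rw [teleEdge_inl_inl]
        exact ⟨fun h => h.1, fun h => ⟨h, hnS⟩⟩

end StepLemmas
section Injectivity

variable {V : Type*} {E S : V → V → Prop} {v : ℕ → V} {n : ℕ}

lemma mid_eval_1_pos {k : ℕ} (hF : E (v k) (v (k + 1))) :
    mid E v k 1 = Sum.inr (Sum.inr (v k, v (k + 1))) := by
  unfold mid; rw [if_pos hF, if_pos rfl]

lemma mid_eval_2_pos {k : ℕ} (hF : E (v k) (v (k + 1))) :
    mid E v k 2 = Sum.inr (Sum.inl (v k, v (k + 1))) := by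
  unfold mid; rw [if_pos hF, if_neg (by omega)]

lemma mid_eval_1_neg {k : ℕ} (hF : ¬ E (v k) (v (k + 1))) :
    mid E v k 1 = Sum.inr (Sum.inl (v (k + 1), v k)) := by
  unfold mid; rw [if_neg hF, if_pos rfl]

lemma mid_eval_2_neg {k : ℕ} (hF : ¬ E (v k) (v (k + 1))) :
    mid E v k 2 = Sum.inr (Sum.inr (v (k + 1), v k)) := by
  unfold mid; rw [if_neg hF, if_neg (by omega)]

lemma mid_inj (hvinj : ∀ i j, i ≤ n → j ≤ n → v i = v j → i = j)
    {k k' r r' : ℕ} (hk : k < n) (hk' : k' < n)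
    (hr : r = 1 ∨ r = 2) (hr' : r' = 1 ∨ r' = 2)
    (h : mid E v k r = mid E v k' r') : k = k' ∧ r = r' := by
  have hkn : k + 1 ≤ n := hk
  have hkn' : k' + 1 ≤ n := hk'
  rcases hr with rfl | rfl <;> rcases hr' with rfl | rfl <;>
    by_cases hF : E (v k) (v (k + 1)) <;> by_cases hF' : E (v k') (v (k' + 1)) <;>
    [rw [mid_eval_1_pos hF, mid_eval_1_pos hF'] at h;
     rw [mid_eval_1_pos hF, mid_eval_1_neg hF'] at h;
     rw [mid_eval_1_neg hF, mid_eval_1_pos hF'] at h;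
     rw [mid_eval_1_neg hF, mid_eval_1_neg hF'] at h;
     rw [mid_eval_1_pos hF, mid_eval_2_pos hF'] at h;
     rw [mid_eval_1_pos hF, mid_eval_2_neg hF'] at h;
     rw [mid_eval_1_neg hF, mid_eval_2_pos hF'] at h;
     rw [mid_eval_1_neg hF, mid_eval_2_neg hF'] at h;
     rw [mid_eval_2_pos hF, mid_eval_1_pos hF'] at h;
     rw [mid_eval_2_pos hF, mid_eval_1_neg hF'] at h;
     rw [mid_eval_2_neg hF, mid_eval_1_pos hF'] at h;
     rw [mid_eval_2_neg hF, mid_eval_1_neg hF'] at h;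
     rw [mid_eval_2_pos hF, mid_eval_2_pos hF'] at h;
     rw [mid_eval_2_pos hF, mid_eval_2_neg hF'] at h;
     rw [mid_eval_2_neg hF, mid_eval_2_pos hF'] at h;
     rw [mid_eval_2_neg hF, mid_eval_2_neg hF'] at h] <;>
    simp only [Sum.inr.injEq, Sum.inl.injEq, Prod.mk.injEq] at h
  all_goals obtain ⟨h1, h2⟩ := h
  all_goals
    have e1 := hvinj _ _ (by omega) (by omega) h1
    have e2 := hvinj _ _ (by omega) (by omega) h2
    omega

/-- Injectivity of the teleportation path. -/
lemma tw_inj (hvinj : ∀ i j, i ≤ n → j ≤ n → v i = v j → i = j)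
    {p q : ℕ} (hp : p ≤ off E S v n) (hq : q ≤ off E S v n)
    (h : tw E S v n p = tw E S v n q) : p = q := by
  obtain ⟨k, hkc⟩ := decode (E := E) (S := S) (v := v) hp
  obtain ⟨k', hkc'⟩ := decode (E := E) (S := S) (v := v) hq
  rcases hkc with ⟨hkn, rfl⟩ | ⟨hkn, hspl, hrc⟩ <;>
    rcases hkc' with ⟨hkn', rfl⟩ | ⟨hkn', hspl', hrc'⟩
  · rw [tw_off hkn, tw_off hkn'] at h
    rw [hvinj _ _ hkn hkn' (Sum.inl.inj h)]
  · exfalso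
    rcases hrc' with rfl | rfl <;>
      rw [tw_off hkn, tw_mid hkn' hspl' (by omega)] at h <;>
      exact mid_ne_inl h.symm
  · exfalso
    rcases hrc with rfl | rfl <;>
      rw [tw_off hkn', tw_mid hkn hspl (by omega)] at h <;>
      exact mid_ne_inl h
  · rcases hrc with rfl | rfl <;> rcases hrc' with rfl | rfl <;>
      rw [tw_mid hkn hspl (by omega), tw_mid hkn' hspl' (by omega)] at h <;>
      obtain ⟨rfl, e⟩ := mid_inj hvinj hkn hkn' (by omega) (by omega) h <;> omega

end Injectivity
lemma off_zero {V : Type*} {E S : V → V → Prop} {v : ℕ → V} : off E S v 0 = 0 := rfl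

section Main

variable {V : Type*}

theorem main_thm [Fintype V]
    (E : V → V → Prop) (hacyc : Acyclic E)
    (V1 V2 V3 : Set V)
    (h12 : Disjoint V1 V2) (h13 : Disjoint V1 V3) (h23 : Disjoint V2 V3)
    (h1 : V1.Nonempty) (h2 : V2.Nonempty) :
    PSep E V1 V2 V3 ↔ DSep E V1 V2 V3 := by
  constructor
  · rintro ⟨S, hSE, hSA, hDT⟩ n v hp
    by_contra hnb
    obtain ⟨hn1, hvinj, hv1, hv2, hedge⟩ := hp
    have hNn : 1 ≤ off E S v n := by
      have := off_strictMono (E := E) (S := S) (v := v) (show 0 < n from hn1)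
      rw [off_zero] at this
      omega
    have hpath : IsPathBetween (TeleEdge E S) (Sum.inl '' V1) (Sum.inl '' V2)
        (off E S v n) (tw E S v n) := by
      refine ⟨hNn, fun i j hi hj hij => tw_inj hvinj hi hj hij, ?_, ?_, ?_⟩
      · show tw E S v n (off E S v 0) ∈ _
        rw [tw_off (Nat.zero_le n)]
        exact ⟨v 0, hv1, rfl⟩
      · rw [tw_off le_rfl]
        exact ⟨v n, hv2, rfl⟩
      · intro p hplt
        obtain ⟨k, hkc⟩ := decode (E := E) (S := S) (v := v) (le_of_lt hplt)
        rcases hkc with ⟨hkn, rfl⟩ | ⟨hkn, hspl, hrc⟩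
        · have hklt : k < n := by
            rcases lt_or_eq_of_le hkn with h | h
            · exact h
            · subst h; exact absurd hplt (lt_irrefl _)
          rw [tw_off hkn]
          obtain ⟨hiff1, hiff2⟩ := step_right (S := S) hacyc hklt (hedge k hklt)
          rcases hedge k hklt with he | he
          · exact Or.inl (hiff1.mpr he)
          · exact Or.inr (hiff2.mpr he)
        · rcases hrc with rfl | rfl
          · have e1 := tw_mid (E := E) (S := S) (v := v) hkn hspl (Or.inl rfl)
            have e2 : tw E S v n (off E S v k + 1 + 1) = mid E v k 2 :=
              tw_mid (E := E) (S := S) (v := v) hkn hspl (Or.inr rfl)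
            rw [e1, e2]
            by_cases hF : E (v k) (v (k + 1))
            · have hS := spl_fwd hacyc hspl hF
              rw [mid_eval_1_pos hF, mid_eval_2_pos hF]
              exact Or.inr (Or.inr (Or.inr (Or.inl ⟨v k, v (k + 1), hS, rfl, rfl⟩)))
            · have hS := spl_bwd hacyc hspl hF
              rw [mid_eval_1_neg hF, mid_eval_2_neg hF]
              exact Or.inl (Or.inr (Or.inr (Or.inl ⟨v (k + 1), v k, hS, rfl, rfl⟩)))
          · have h3 : off E S v (k + 1) = off E S v k + 3 := off_succ_of_spl hspl
            have e3 : off E S v k + 2 + 1 = off E S v (k + 1) := by omega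
            have e2 : off E S v k + 2 = off E S v (k + 1) - 1 := by omega
            rw [e3, tw_off (by omega : k + 1 ≤ n), e2]
            obtain ⟨hiff1, hiff2⟩ := step_left (S := S) hacyc hkn (hedge k hkn)
            rcases hedge k hkn with he | he
            · exact Or.inl (hiff1.mpr he)
            · exact Or.inr (hiff2.mpr he)
    obtain ⟨p, hp0, hpN, hbl⟩ := hDT (off E S v n) (tw E S v n) hpath
    obtain ⟨k, hkc⟩ := decode (E := E) (S := S) (v := v) (le_of_lt hpN)
    rcases hkc with ⟨hkn, rfl⟩ | ⟨hkn, hspl, hrc⟩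
    · -- position is an original vertex `inl (v k)`
      have hk0 : 0 < k := by
        by_contra h0
        have hk00 : k = 0 := by omega
        rw [hk00, off_zero] at hp0
        exact lt_irrefl 0 hp0
      have hklt : k < n := by
        rcases lt_or_eq_of_le hkn with h | h
        · exact h
        · subst h; exact absurd hpN (lt_irrefl _)
      have hk1 : k - 1 + 1 = k := by omega
      have hejm : E (v (k - 1)) (v (k - 1 + 1)) ∨ E (v (k - 1 + 1)) (v (k - 1)) :=
        hedge (k - 1) (by omega)
      have hleft := step_left (S := S) (n := n) (v := v) hacyc
        (show k - 1 < n by omega) hejm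
      rw [hk1] at hleft
      have hright := step_right (S := S) (n := n) hacyc hklt (hedge k hklt)
      unfold BlockedAt at hbl
      rw [tw_off hkn] at hbl
      rcases hbl with ⟨hz, hpat⟩ | ⟨hL, hR, hdesc⟩
      · have hzV3 : v k ∈ V3 := by
          rcases hz with ⟨a, ha, hEq⟩ | ⟨a, b, hS', hEq⟩
          · rw [Sum.inl.injEq] at hEq; rwa [← hEq]
          · exact absurd hEq (by simp)
        refine hnb ⟨k, hk0, hklt, Or.inl ⟨hzV3, ?_⟩⟩
        rcases hpat with ⟨x1, x2⟩ | ⟨x1, x2⟩ | ⟨x1, x2⟩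
        · exact Or.inl ⟨hleft.1.mp x1, hright.1.mp x2⟩
        · exact Or.inr (Or.inl ⟨hright.2.mp x1, hleft.2.mp x2⟩)
        · exact Or.inr (Or.inr ⟨hleft.2.mp x1, hright.1.mp x2⟩)
      · refine hnb ⟨k, hk0, hklt, Or.inr ⟨hleft.1.mp hL, hright.2.mp hR, ?_⟩⟩
        intro u hu huV3
        obtain ⟨z, hz1, hz2⟩ := desc_tele (S := S) hu huV3
        exact hdesc z hz1 hz2
    · -- position is a mid vertex of a split step
      exfalso
      unfold BlockedAt at hbl
      rcases hrc with rfl | rfl <;>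
        rw [tw_mid hkn hspl (by omega)] at hbl <;>
        by_cases hF : E (v k) (v (k + 1))
      · -- r = 1, forward: T vertex
        rw [mid_eval_1_pos hF] at hbl
        rcases hbl with ⟨_, hpat⟩ | ⟨_, _, hdesc⟩
        · rcases hpat with ⟨_, h⟩ | ⟨_, h⟩ | ⟨h, _⟩ <;> exact teleEdge_not_from_T h
        · exact hdesc _ Relation.ReflTransGen.refl
            (Or.inr ⟨v k, v (k + 1), spl_fwd hacyc hspl hF, rfl⟩)
      · -- r = 1, backward: R vertex
        rw [mid_eval_1_neg hF] at hbl
        rcases hbl with ⟨hz, _⟩ | ⟨h, _, _⟩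
        · rcases hz with ⟨a, _, hEq⟩ | ⟨a, b, _, hEq⟩ <;> simp at hEq
        · exact teleEdge_not_to_R h
      · -- r = 2, forward: R vertex
        rw [mid_eval_2_pos hF] at hbl
        rcases hbl with ⟨hz, _⟩ | ⟨h, _, _⟩
        · rcases hz with ⟨a, _, hEq⟩ | ⟨a, b, _, hEq⟩ <;> simp at hEq
        · exact teleEdge_not_to_R h
      · -- r = 2, backward: T vertex
        rw [mid_eval_2_neg hF] at hbl
        rcases hbl with ⟨_, hpat⟩ | ⟨_, _, hdesc⟩
        · rcases hpat with ⟨_, h⟩ | ⟨_, h⟩ | ⟨h, _⟩ <;> exact teleEdge_not_from_T h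
        · exact hdesc _ Relation.ReflTransGen.refl
            (Or.inr ⟨v (k + 1), v k, spl_bwd hacyc hspl hF, rfl⟩)
  · intro hd
    refine ⟨fun _ _ => False, fun a b h => h.elim, ?_, ?_⟩
    · intro w hw
      exact hacyc w (Relation.TransGen.mono (fun a b h => h.1) w w hw)
    · intro n w hw
      obtain ⟨hn1, hwinj, hw1, hw2, hedge⟩ := hw
      have hall : ∀ p, p ≤ n → ∃ a, w p = Sum.inl a := by
        intro p hp
        rcases lt_or_eq_of_le hp with h | h
        · rcases hedge p h with he | he
          · obtain ⟨a, b, _, ha, _⟩ := tele_false he; exact ⟨a, ha⟩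
          · obtain ⟨a, b, _, _, hb⟩ := tele_false he; exact ⟨b, hb⟩
        · subst h
          have hn' : p - 1 + 1 = p := by omega
          rcases hedge (p - 1) (by omega) with he | he
          · obtain ⟨a, b, _, _, hb⟩ := tele_false he
            exact ⟨b, by rw [← hn']; exact hb⟩
          · obtain ⟨a, b, _, ha, _⟩ := tele_false he
            exact ⟨a, by rw [← hn']; exact ha⟩
      classical
      set u : ℕ → V := fun p => Sum.elim id (fun _ => h1.some) (w p) with hudef
      have hwu : ∀ p, p ≤ n → w p = Sum.inl (u p) := by
        intro p hp
        obtain ⟨a, ha⟩ := hall p hp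
        simp [hudef, ha]
      have hpu : IsPathBetween E V1 V2 n u := by
        refine ⟨hn1, ?_, ?_, ?_, ?_⟩
        · intro i j hi hj hij
          apply hwinj i j hi hj
          rw [hwu i hi, hwu j hj, hij]
        · obtain ⟨a, haV1, haeq⟩ := hw1
          have h0 : Sum.inl a = (Sum.inl (u 0) : TVert V) := by
            rw [haeq]; exact hwu 0 (by omega)
          exact Sum.inl.inj h0 ▸ haV1
        · obtain ⟨a, haV2, haeq⟩ := hw2
          have h0 : Sum.inl a = (Sum.inl (u n) : TVert V) := by
            rw [haeq]; exact hwu n le_rfl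
          exact Sum.inl.inj h0 ▸ haV2
        · intro i hi
          rcases hedge i hi with he | he <;>
            obtain ⟨a, b, hE, ha, hb⟩ := tele_false he
          · rw [hwu i (by omega), Sum.inl.injEq] at ha
            rw [hwu (i + 1) (by omega), Sum.inl.injEq] at hb
            rw [← ha, ← hb] at hE
            exact Or.inl hE
          · rw [hwu (i + 1) (by omega), Sum.inl.injEq] at ha
            rw [hwu i (by omega), Sum.inl.injEq] at hb
            rw [← ha, ← hb] at hE
            exact Or.inr hE
      obtain ⟨k, hk0, hkn, hbl⟩ := hd n u hpu
      refine ⟨k, hk0, hkn, ?_⟩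
      have mk : ∀ a b : V, E a b → TeleEdge E (fun _ _ => False) (Sum.inl a) (Sum.inl b) :=
        fun a b h => Or.inl ⟨a, b, h, not_false, rfl, rfl⟩
      unfold BlockedAt at hbl ⊢
      rw [hwu (k - 1) (by omega), hwu k (by omega), hwu (k + 1) (by omega)]
      rcases hbl with ⟨hz, hpat⟩ | ⟨hl, hr, hdesc⟩
      · refine Or.inl ⟨Or.inl ⟨u k, hz, rfl⟩, ?_⟩
        rcases hpat with ⟨x1, x2⟩ | ⟨x1, x2⟩ | ⟨x1, x2⟩
        · exact Or.inl ⟨mk _ _ x1, mk _ _ x2⟩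
        · exact Or.inr (Or.inl ⟨mk _ _ x1, mk _ _ x2⟩)
        · exact Or.inr (Or.inr ⟨mk _ _ x1, mk _ _ x2⟩)
      · refine Or.inr ⟨mk _ _ hl, mk _ _ hr, ?_⟩
        intro x hx hxZ
        obtain ⟨b, rfl, hab⟩ := desc_tele_false hx
        rcases hxZ with ⟨c, hc, hceq⟩ | ⟨a', b', hS', _⟩
        · rw [Sum.inl.injEq] at hceq
          rw [hceq] at hc
          exact hdesc b hab hc
        · exact hS'

end Main

/-- on a finite acyclic directed graph, p-separation coincides with
d-separation. -/
theorem psep_iff_dsep_of_acyclic [Fintype V]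
    (E : V → V → Prop) (hacyc : Acyclic E)
    (V1 V2 V3 : Set V)
    (h12 : Disjoint V1 V2) (h13 : Disjoint V1 V3) (h23 : Disjoint V2 V3)
    (h1 : V1.Nonempty) (h2 : V2.Nonempty) :
    PSep E V1 V2 V3 ↔ DSep E V1 V2 V3 := by
  exact main_thm E hacyc V1 V2 V3 h12 h13 h23 h1 h2
end

section
/- p-separation implies d-separation in any directed graph (equivalently, d-connection implies p-connection): let G = (V,E) be any finite directed graph and V1, V2, V3 ⊆ V pairwise disjoint with V1 and V2 nonempty. If V1 and V2 are d-connected given V3 in G (i.e. some path from V1 to V2 is not blocked by V3), then in every teleportation graph H for G with post-selection vertices P, V1 and V2 are d-connected given V3 ∪ P; consequently (V1 ⊥ᵖ V2 | V3)_G implies (V1 ⊥ᵈ V2 | V3)_G. -/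
variable {V : Type*}

namespace Tele

theorem no_out_T (E S : V → V → Prop) (e : V × V) (y : TVert V) :
    ¬ TeleEdge E S (Sum.inr (Sum.inr e)) y := by
  rintro (⟨a,b,_,_,h,_⟩|⟨a,b,_,h,_⟩|⟨a,b,_,h,_⟩|⟨a,b,_,h,_⟩) <;> simp_all

theorem no_in_R (E S : V → V → Prop) (e : V × V) (y : TVert V) :
    ¬ TeleEdge E S y (Sum.inr (Sum.inl e)) := by
  rintro (⟨a,b,_,_,_,h⟩|⟨a,b,_,_,h⟩|⟨a,b,_,_,h⟩|⟨a,b,_,_,h⟩) <;> simp_all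

theorem inl_inl (E S : V → V → Prop) {a b : V} (h : TeleEdge E S (Sum.inl a) (Sum.inl b)) :
    E a b := by
  rcases h with ⟨a',b',hE,_,h1,h2⟩|⟨a',b',_,_,h2⟩|⟨a',b',_,h1,_⟩|⟨a',b',_,h1,_⟩ <;> simp_all

theorem R_inl (E S : V → V → Prop) {a b c : V}
    (h : TeleEdge E S (Sum.inr (Sum.inl (a,b))) (Sum.inl c)) : S a b ∧ c = b := by
  rcases h with ⟨a',b',_,_,h1,_⟩|⟨a',b',_,h1,_⟩|⟨a',b',_,_,h2⟩|⟨a',b',hS,h1,h2⟩ <;> simp_all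

theorem inl_T (E S : V → V → Prop) {a b c : V}
    (h : TeleEdge E S (Sum.inl c) (Sum.inr (Sum.inr (a,b)))) : S a b ∧ c = a := by
  rcases h with ⟨a',b',_,_,_,h2⟩|⟨a',b',hS,h1,h2⟩|⟨a',b',_,h1,_⟩|⟨a',b',_,_,h2⟩ <;> simp_all

theorem edge1 {E S : V → V → Prop} {a b : V} (hE : E a b) (hnS : ¬ S a b) :
    TeleEdge E S (Sum.inl a) (Sum.inl b) := Or.inl ⟨a,b,hE,hnS,rfl,rfl⟩

theorem edge2 {E S : V → V → Prop} {a b : V} (hS : S a b) :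
    TeleEdge E S (Sum.inl a) (Sum.inr (Sum.inr (a,b))) := Or.inr (Or.inl ⟨a,b,hS,rfl,rfl⟩)

theorem edge3 {E S : V → V → Prop} {a b : V} (hS : S a b) :
    TeleEdge E S (Sum.inr (Sum.inl (a,b))) (Sum.inr (Sum.inr (a,b))) :=
  Or.inr (Or.inr (Or.inl ⟨a,b,hS,rfl,rfl⟩))

theorem edge4 {E S : V → V → Prop} {a b : V} (hS : S a b) :
    TeleEdge E S (Sum.inr (Sum.inl (a,b))) (Sum.inl b) :=
  Or.inr (Or.inr (Or.inr ⟨a,b,hS,rfl,rfl⟩))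

theorem desc_transfer (E S : V → V → Prop) {a u : V} (h : Relation.ReflTransGen E a u) :
    Desc (TeleEdge E S) (Sum.inl a) (Sum.inl u) ∨
      ∃ p ∈ TelePost S, Desc (TeleEdge E S) (Sum.inl a) p := by
  induction h with
  | refl => exact Or.inl Relation.ReflTransGen.refl
  | @tail b c hab hbc ih =>
    rcases ih with hd | hp
    · by_cases hs : S b c
      · exact Or.inr ⟨Sum.inr (Sum.inr (b,c)), ⟨b,c,hs,rfl⟩, hd.tail (edge2 hs)⟩
      · exact Or.inl (hd.tail (edge1 hbc hs))
    · exact Or.inr hp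

open Classical in
/-- direction choice for step `i` -/
noncomputable def dir (E : V → V → Prop) (v : ℕ → V) (i : ℕ) : Bool :=
  if E (v i) (v (i+1)) then true else false

/-- the (ordered) edge used at step `i` -/
noncomputable def eP (E : V → V → Prop) (v : ℕ → V) (i : ℕ) : V × V :=
  if dir E v i then (v i, v (i+1)) else (v (i+1), v i)

open Classical in
noncomputable def spl (E S : V → V → Prop) (v : ℕ → V) (i : ℕ) : Bool :=
  if S (eP E v i).1 (eP E v i).2 then true else false

noncomputable def len (E S : V → V → Prop) (v : ℕ → V) (i : ℕ) : ℕ :=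
  if spl E S v i then 3 else 1

noncomputable def pos (E S : V → V → Prop) (v : ℕ → V) (m : ℕ) : ℕ :=
  ∑ j ∈ Finset.range m, len E S v j

/-- segment vertices: offset 0 is `inl (v i)`; offsets 1,2 (when split) are the
fresh vertices, ordered so that `T` is adjacent to the tail of the split edge. -/
noncomputable def seg (E S : V → V → Prop) (v : ℕ → V) (i r : ℕ) : TVert V :=
  if r = 0 then Sum.inl (v i)
  else if (r = 1) = (dir E v i = true) then Sum.inr (Sum.inr (eP E v i))
  else Sum.inr (Sum.inl (eP E v i))

theorem dir_true {E : V → V → Prop} {v : ℕ → V} {i : ℕ} (h : dir E v i = true) :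
    E (v i) (v (i+1)) := by
  by_contra hE; simp [dir, hE] at h

theorem dir_false {E : V → V → Prop} {v : ℕ → V} {i : ℕ} (h : dir E v i = false) :
    ¬ E (v i) (v (i+1)) := by
  intro hE; simp [dir, hE] at h

theorem spl_true {E S : V → V → Prop} {v : ℕ → V} {i : ℕ} (h : spl E S v i = true) :
    S (eP E v i).1 (eP E v i).2 := by
  by_contra hs; simp [spl, hs] at h

theorem spl_false {E S : V → V → Prop} {v : ℕ → V} {i : ℕ} (h : spl E S v i = false) :
    ¬ S (eP E v i).1 (eP E v i).2 := by
  intro hs; simp [spl, hs] at h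

theorem eP_true {E : V → V → Prop} {v : ℕ → V} {i : ℕ} (h : dir E v i = true) :
    eP E v i = (v i, v (i+1)) := by simp [eP, h]

theorem eP_false {E : V → V → Prop} {v : ℕ → V} {i : ℕ} (h : dir E v i = false) :
    eP E v i = (v (i+1), v i) := by simp [eP, h]

theorem len_pos (E S : V → V → Prop) (v : ℕ → V) (i : ℕ) : 1 ≤ len E S v i := by
  unfold len; split <;> omega

theorem len_eq_one {E S : V → V → Prop} {v : ℕ → V} {i : ℕ} (h : spl E S v i = false) :
    len E S v i = 1 := by simp [len, h]

theorem len_eq_three {E S : V → V → Prop} {v : ℕ → V} {i : ℕ} (h : spl E S v i = true) :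
    len E S v i = 3 := by simp [len, h]

theorem pos_succ (E S : V → V → Prop) (v : ℕ → V) (m : ℕ) :
    pos E S v (m+1) = pos E S v m + len E S v m := Finset.sum_range_succ _ _

theorem pos_mono (E S : V → V → Prop) (v : ℕ → V) {m m' : ℕ} (h : m ≤ m') :
    pos E S v m ≤ pos E S v m' :=
  Finset.sum_le_sum_of_subset (Finset.range_subset_range.2 h)

theorem le_pos (E S : V → V → Prop) (v : ℕ → V) (m : ℕ) : m ≤ pos E S v m := by
  induction m with
  | zero => simp [pos]
  | succ m ih => rw [pos_succ]; have := len_pos E S v m; omega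

noncomputable def hw (E S : V → V → Prop) (v : ℕ → V) : ℕ → ℕ → TVert V
  | i, k =>
    if h : k < len E S v i then seg E S v i k
    else hw E S v (i+1) (k - len E S v i)
  termination_by i k => k
  decreasing_by
    have := len_pos E S v i; omega

theorem hw_eval (E S : V → V → Prop) (v : ℕ → V) :
    ∀ m i r, r < len E S v (i+m) →
      hw E S v i ((∑ j ∈ Finset.range m, len E S v (i+j)) + r) = seg E S v (i+m) r := by
  intro m
  induction m with
  | zero =>
    intro i r hr
    simp only [Nat.add_zero] at hr ⊢
    simp only [Finset.range_zero, Finset.sum_empty, Nat.zero_add]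
    rw [hw, dif_pos hr]
  | succ m ih =>
    intro i r hr
    rw [Finset.sum_range_succ' (fun j => len E S v (i+j)) m]
    have hsum : (∑ j ∈ Finset.range m, len E S v (i+(j+1)))
        = ∑ j ∈ Finset.range m, len E S v ((i+1)+j) :=
      Finset.sum_congr rfl (fun j _ => by rw [show i+(j+1) = (i+1)+j from by omega])
    have h1 : (∑ j ∈ Finset.range m, len E S v (i+(j+1))) + len E S v (i+0) + r
        = len E S v i + ((∑ j ∈ Finset.range m, len E S v ((i+1)+j)) + r) := by
      rw [hsum]; simp only [Nat.add_zero]; omega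
    rw [h1, hw]
    have hnl : ¬ (len E S v i + ((∑ j ∈ Finset.range m, len E S v ((i+1)+j)) + r)
        < len E S v i) := by omega
    rw [dif_neg hnl]
    have h2 : len E S v i + ((∑ j ∈ Finset.range m, len E S v ((i+1)+j)) + r)
        - len E S v i = (∑ j ∈ Finset.range m, len E S v ((i+1)+j)) + r := by omega
    rw [h2]
    have h3 : (i+1)+m = i+(m+1) := by omega
    rw [ih (i+1) r (by rw [h3]; exact hr), h3]

/-- the teleportation-graph path -/
noncomputable def W (E S : V → V → Prop) (v : ℕ → V) (k : ℕ) : TVert V :=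
  hw E S v 0 k

theorem W_eval (E S : V → V → Prop) (v : ℕ → V) {m r : ℕ} (hr : r < len E S v m) :
    W E S v (pos E S v m + r) = seg E S v m r := by
  have := hw_eval E S v m 0 r (by simpa using hr)
  simpa [W, pos] using this

theorem W_pos (E S : V → V → Prop) (v : ℕ → V) (m : ℕ) :
    W E S v (pos E S v m) = Sum.inl (v m) := by
  have := W_eval E S v (m := m) (r := 0) (len_pos E S v m)
  simpa [seg] using this

theorem decompose (E S : V → V → Prop) (v : ℕ → V) :
    ∀ m k, k < pos E S v m → ∃ i r, i < m ∧ r < len E S v i ∧ k = pos E S v i + r := by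
  intro m
  induction m with
  | zero => intro k hk; simp [pos] at hk
  | succ m ih =>
    intro k hk
    rw [pos_succ] at hk
    by_cases h : k < pos E S v m
    · obtain ⟨i, r, h1, h2, h3⟩ := ih k h
      exact ⟨i, r, by omega, h2, h3⟩
    · exact ⟨m, k - pos E S v m, by omega, by omega, by omega⟩

theorem seg_zero (E S : V → V → Prop) (v : ℕ → V) (i : ℕ) :
    seg E S v i 0 = Sum.inl (v i) := by simp [seg]

theorem seg_one_T {E S : V → V → Prop} {v : ℕ → V} {i : ℕ} (h : dir E v i = true) :
    seg E S v i 1 = Sum.inr (Sum.inr (v i, v (i+1))) := by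
  simp [seg, eP, h]

theorem seg_two_R {E S : V → V → Prop} {v : ℕ → V} {i : ℕ} (h : dir E v i = true) :
    seg E S v i 2 = Sum.inr (Sum.inl (v i, v (i+1))) := by
  simp [seg, eP, h]

theorem seg_one_R {E S : V → V → Prop} {v : ℕ → V} {i : ℕ} (h : dir E v i = false) :
    seg E S v i 1 = Sum.inr (Sum.inl (v (i+1), v i)) := by
  simp [seg, eP, h]

theorem seg_two_T {E S : V → V → Prop} {v : ℕ → V} {i : ℕ} (h : dir E v i = false) :
    seg E S v i 2 = Sum.inr (Sum.inr (v (i+1), v i)) := by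
  simp [seg, eP, h]

theorem R_notMem (S : V → V → Prop) (V3 : Set V) (e : V × V) :
    Sum.inr (Sum.inl e) ∉ (Sum.inl '' V3 ∪ TelePost S) := by
  rintro (⟨x,_,h⟩|⟨a,b,_,h⟩) <;> simp_all

theorem inl_mem {S : V → V → Prop} {V3 : Set V} {x : V}
    (h : Sum.inl x ∈ (Sum.inl '' V3 ∪ TelePost S)) : x ∈ V3 := by
  rcases h with ⟨y,hy,he⟩|⟨a,b,_,he⟩ <;> simp_all

theorem not_blockedAt_T (E S : V → V → Prop) (V3 : Set V) (w : ℕ → TVert V) (k : ℕ)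
    {a b : V} (hS : S a b) (hwk : w k = Sum.inr (Sum.inr (a,b))) :
    ¬ BlockedAt (TeleEdge E S) (Sum.inl '' V3 ∪ TelePost S) w k := by
  rintro (⟨_, ⟨_,h⟩|⟨_,h⟩|⟨h,_⟩⟩ | ⟨_,_,h3⟩)
  · exact no_out_T E S _ _ (hwk ▸ h)
  · exact no_out_T E S _ _ (hwk ▸ h)
  · exact no_out_T E S _ _ (hwk ▸ h)
  · exact h3 (w k) Relation.ReflTransGen.refl (Or.inr ⟨a, b, hS, hwk⟩)

theorem not_blockedAt_R (E S : V → V → Prop) (V3 : Set V) (w : ℕ → TVert V) (k : ℕ)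
    {e : V × V} (hwk : w k = Sum.inr (Sum.inl e)) :
    ¬ BlockedAt (TeleEdge E S) (Sum.inl '' V3 ∪ TelePost S) w k := by
  rintro (⟨hm, _⟩ | ⟨h3,_,_⟩)
  · exact R_notMem S V3 e (hwk ▸ hm)
  · exact no_in_R E S _ _ (hwk ▸ h3)

end Tele

/-- if `V1` and `V2` are d-connected given `V3` in `G`, then in every
teleportation graph for `G` they are d-connected given `V3` together with the
post-selection vertices; consequently p-separation implies d-separation in any
finite directed graph. -/
theorem dconnection_implies_pconnection [Fintype V]
    (E : V → V → Prop) (V1 V2 V3 : Set V)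
    (h12 : Disjoint V1 V2) (h13 : Disjoint V1 V3) (h23 : Disjoint V2 V3)
    (h1 : V1.Nonempty) (h2 : V2.Nonempty) :
    (¬ DSep E V1 V2 V3 →
      ∀ S : V → V → Prop,
        (∀ a b, S a b → E a b) →
        Acyclic (fun a b => E a b ∧ ¬ S a b) →
        ¬ DSep (TeleEdge E S) (Sum.inl '' V1) (Sum.inl '' V2)
            ((Sum.inl '' V3) ∪ TelePost S)) ∧
    (PSep E V1 V2 V3 → DSep E V1 V2 V3) := by
  have main : ¬ DSep E V1 V2 V3 →
      ∀ S : V → V → Prop,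
        (∀ a b, S a b → E a b) →
        Acyclic (fun a b => E a b ∧ ¬ S a b) →
        ¬ DSep (TeleEdge E S) (Sum.inl '' V1) (Sum.inl '' V2)
            ((Sum.inl '' V3) ∪ TelePost S) := by
    intro hnd S hSE _
    rw [DSep] at hnd
    push_neg at hnd
    obtain ⟨n, v, hpath, hnb⟩ := hnd
    obtain ⟨hn1, hinj, hv0, hvn, hedge⟩ := hpath
    simp only [Blocked, not_exists, not_and] at hnb
    intro hd
    have hdirE : ∀ i, i < n → Tele.dir E v i = false → E (v (i+1)) (v i) := by
      intro i hi hdf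
      exact (hedge i hi).resolve_left (Tele.dir_false hdf)
    -- injectivity of the eP tags
    have hePinj : ∀ i j, i < n → j < n → Tele.eP E v i = Tele.eP E v j → i = j := by
      intro i j hi hj he
      unfold Tele.eP at he
      cases hdi : Tele.dir E v i <;> cases hdj : Tele.dir E v j <;>
        simp only [hdi, hdj, if_true, if_false, Bool.false_eq_true, Prod.mk.injEq] at he <;>
        obtain ⟨e1, e2⟩ := he
      · have := hinj _ _ (by omega) (by omega) e1; omega
      · have ha := hinj _ _ (by omega) (by omega) e1
        have hb := hinj _ _ (by omega) (by omega) e2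
        omega
      · have ha := hinj _ _ (by omega) (by omega) e1
        have hb := hinj _ _ (by omega) (by omega) e2
        omega
      · have := hinj _ _ (by omega) (by omega) e1; omega
    -- classification of indices
    have hclass : ∀ k, k ≤ Tele.pos E S v n →
        (∃ i, i ≤ n ∧ k = Tele.pos E S v i ∧ Tele.W E S v k = Sum.inl (v i)) ∨
        (∃ i r, i < n ∧ (r = 1 ∨ r = 2) ∧ Tele.spl E S v i = true ∧
          k = Tele.pos E S v i + r ∧ Tele.W E S v k = Tele.seg E S v i r) := by
      intro k hk
      rcases eq_or_lt_of_le hk with heq | hlt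
      · exact Or.inl ⟨n, le_refl n, heq, by rw [heq, Tele.W_pos]⟩
      · obtain ⟨i, r, hi, hr, hkr⟩ := Tele.decompose E S v n k hlt
        rcases Nat.eq_zero_or_pos r with rfl | hrpos
        · exact Or.inl ⟨i, by omega, by omega, by
            rw [hkr]; simpa using Tele.W_pos E S v i⟩
        · have hsp : Tele.spl E S v i = true := by
            by_contra hs
            rw [Tele.len_eq_one (by simpa using hs)] at hr
            omega
          have hr3 : r = 1 ∨ r = 2 := by
            rw [Tele.len_eq_three hsp] at hr; omega
          exact Or.inr ⟨i, r, hi, hr3, hsp, hkr, by rw [hkr]; exact Tele.W_eval E S v hr⟩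
    -- the constructed path is injective
    have hWinj : ∀ k k', k ≤ Tele.pos E S v n → k' ≤ Tele.pos E S v n →
        Tele.W E S v k = Tele.W E S v k' → k = k' := by
      intro k k' hk hk' heq
      rcases hclass k hk with ⟨i, hi, hki, hwi⟩ | ⟨i, r, hi, hr, hsi, hki, hwi⟩ <;>
        rcases hclass k' hk' with ⟨j, hj, hkj, hwj⟩ | ⟨j, s, hj, hs, hsj, hkj, hwj⟩
      · rw [hwi, hwj] at heq
        have := hinj i j hi hj (by injection heq)
        rw [hki, hkj, this]
      · rw [hwi, hwj] at heq
        exfalso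
        rcases hs with rfl | rfl <;>
          cases hdj : Tele.dir E v j <;>
          simp [Tele.seg_one_T, Tele.seg_one_R, Tele.seg_two_T, Tele.seg_two_R, hdj] at heq
      · rw [hwi, hwj] at heq
        exfalso
        rcases hr with rfl | rfl <;>
          cases hdi : Tele.dir E v i <;>
          simp [Tele.seg_one_T, Tele.seg_one_R, Tele.seg_two_T, Tele.seg_two_R, hdi] at heq
      · rw [hwi, hwj] at heq
        have hij : i = j ∧ r = s := by
          rcases hr with rfl | rfl <;> rcases hs with rfl | rfl <;>
            cases hdi : Tele.dir E v i <;> cases hdj : Tele.dir E v j <;>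
            simp only [Tele.seg_one_T, Tele.seg_one_R, Tele.seg_two_T, Tele.seg_two_R,
              hdi, hdj, Sum.inr.injEq, Sum.inl.injEq, Prod.mk.injEq,
              reduceCtorEq] at heq
          all_goals
            obtain ⟨e1, e2⟩ := heq
          all_goals
            have ha := hinj _ _ (by omega) (by omega) e1
          all_goals
            have hb := hinj _ _ (by omega) (by omega) e2
          all_goals omega
        obtain ⟨rfl, rfl⟩ := hij
        rw [hki, hkj]
    -- edges of the constructed path
    have hadj : ∀ k, k < Tele.pos E S v n →
        TeleEdge E S (Tele.W E S v k) (Tele.W E S v (k+1)) ∨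
        TeleEdge E S (Tele.W E S v (k+1)) (Tele.W E S v k) := by
      intro k hk
      obtain ⟨i, r, hi, hr, rfl⟩ := Tele.decompose E S v n k hk
      have hWk : Tele.W E S v (Tele.pos E S v i + r) = Tele.seg E S v i r :=
        Tele.W_eval E S v hr
      by_cases hsucc : r + 1 < Tele.len E S v i
      · have hWk1 : Tele.W E S v (Tele.pos E S v i + r + 1) = Tele.seg E S v i (r+1) := by
          rw [Nat.add_assoc]; exact Tele.W_eval E S v hsucc
        have hsp : Tele.spl E S v i = true := by
          by_contra hs
          rw [Tele.len_eq_one (by simpa using hs)] at hsucc; omega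
        have hS' := Tele.spl_true hsp
        have hr2 : r = 0 ∨ r = 1 := by have := Tele.len_eq_three hsp; omega
        rw [hWk, hWk1]
        cases hdi : Tele.dir E v i with
        | true =>
          rw [Tele.eP_true hdi] at hS'
          rcases hr2 with rfl | rfl
          · rw [Tele.seg_zero, Tele.seg_one_T hdi]
            exact Or.inl (Tele.edge2 hS')
          · rw [Tele.seg_one_T hdi, Tele.seg_two_R hdi]
            exact Or.inr (Tele.edge3 hS')
        | false =>
          rw [Tele.eP_false hdi] at hS'
          rcases hr2 with rfl | rfl
          · rw [Tele.seg_zero, Tele.seg_one_R hdi]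
            exact Or.inr (Tele.edge4 hS')
          · rw [Tele.seg_one_R hdi, Tele.seg_two_T hdi]
            exact Or.inl (Tele.edge3 hS')
      · have hre : r + 1 = Tele.len E S v i := by omega
        have hWk1 : Tele.W E S v (Tele.pos E S v i + r + 1) = Sum.inl (v (i+1)) := by
          rw [Nat.add_assoc, hre, ← Tele.pos_succ]; exact Tele.W_pos E S v (i+1)
        rw [hWk, hWk1]
        by_cases hsp : Tele.spl E S v i = true
        · have hS' := Tele.spl_true hsp
          have hr2 : r = 2 := by have := Tele.len_eq_three hsp; omega
          subst hr2
          cases hdi : Tele.dir E v i with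
          | true =>
            rw [Tele.eP_true hdi] at hS'
            rw [Tele.seg_two_R hdi]
            exact Or.inl (Tele.edge4 hS')
          | false =>
            rw [Tele.eP_false hdi] at hS'
            rw [Tele.seg_two_T hdi]
            exact Or.inr (Tele.edge2 hS')
        · have hsp' : Tele.spl E S v i = false := by simpa using hsp
          have hr0 : r = 0 := by have := Tele.len_eq_one hsp'; omega
          subst hr0
          rw [Tele.seg_zero]
          have hns := Tele.spl_false hsp'
          cases hdi : Tele.dir E v i with
          | true =>
            rw [Tele.eP_true hdi] at hns
            exact Or.inl (Tele.edge1 (Tele.dir_true hdi) hns)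
          | false =>
            rw [Tele.eP_false hdi] at hns
            exact Or.inr (Tele.edge1 (hdirE i hi hdi) hns)
    -- the constructed path is unblocked
    have hnblk : ∀ k, 0 < k → k < Tele.pos E S v n →
        ¬ BlockedAt (TeleEdge E S) (Sum.inl '' V3 ∪ TelePost S) (Tele.W E S v) k := by
      intro k hk0 hkn
      obtain ⟨i, r, hi, hr, rfl⟩ := Tele.decompose E S v n k hkn
      have hWk : Tele.W E S v (Tele.pos E S v i + r) = Tele.seg E S v i r :=
        Tele.W_eval E S v hr
      rcases Nat.eq_zero_or_pos r with rfl | hrpos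
      · -- original vertex, interior
        simp only [Nat.add_zero] at hk0 hkn hWk ⊢
        rw [Tele.seg_zero] at hWk
        have hi0 : 0 < i := by
          rcases Nat.eq_zero_or_pos i with rfl | h
          · simp [Tele.pos] at hk0
          · exact h
        -- left neighbour
        have hprev : Tele.pos E S v i - 1
            = Tele.pos E S v (i-1) + (Tele.len E S v (i-1) - 1) := by
          have h1 := Tele.pos_succ E S v (i-1)
          rw [show i - 1 + 1 = i from by omega] at h1
          have h2 := Tele.len_pos E S v (i-1)
          omega
        have hWprev : Tele.W E S v (Tele.pos E S v i - 1)
            = Tele.seg E S v (i-1) (Tele.len E S v (i-1) - 1) := by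
          rw [hprev]
          exact Tele.W_eval E S v (by have := Tele.len_pos E S v (i-1); omega)
        have hLin : TeleEdge E S (Tele.W E S v (Tele.pos E S v i - 1)) (Sum.inl (v i)) →
            E (v (i-1)) (v i) := by
          intro hT
          rw [hWprev] at hT
          by_cases hsp : Tele.spl E S v (i-1) = true
          · rw [Tele.len_eq_three hsp] at hT
            norm_num at hT
            cases hdi : Tele.dir E v (i-1) with
            | true =>
              rw [Tele.seg_two_R hdi, show i - 1 + 1 = i from by omega] at hT
              obtain ⟨hs, _⟩ := Tele.R_inl E S hT
              exact hSE _ _ hs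
            | false =>
              rw [Tele.seg_two_T hdi] at hT
              exact absurd hT (Tele.no_out_T E S _ _)
          · rw [Tele.len_eq_one (by simpa using hsp)] at hT
            norm_num at hT
            rw [Tele.seg_zero] at hT
            have := Tele.inl_inl E S hT
            exact this
        have hLout : TeleEdge E S (Sum.inl (v i)) (Tele.W E S v (Tele.pos E S v i - 1)) →
            E (v i) (v (i-1)) := by
          intro hT
          rw [hWprev] at hT
          by_cases hsp : Tele.spl E S v (i-1) = true
          · rw [Tele.len_eq_three hsp] at hT
            norm_num at hT
            cases hdi : Tele.dir E v (i-1) with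
            | true =>
              rw [Tele.seg_two_R hdi] at hT
              exact absurd hT (Tele.no_in_R E S _ _)
            | false =>
              rw [Tele.seg_two_T hdi, show i - 1 + 1 = i from by omega] at hT
              obtain ⟨hs, _⟩ := Tele.inl_T E S hT
              exact hSE _ _ hs
          · rw [Tele.len_eq_one (by simpa using hsp)] at hT
            norm_num at hT
            rw [Tele.seg_zero] at hT
            exact Tele.inl_inl E S hT
        -- right neighbour
        have hWnext : (Tele.spl E S v i = true →
              Tele.W E S v (Tele.pos E S v i + 1) = Tele.seg E S v i 1) ∧
            (Tele.spl E S v i = false →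
              Tele.W E S v (Tele.pos E S v i + 1) = Sum.inl (v (i+1))) := by
          constructor
          · intro hsp
            exact Tele.W_eval E S v (by rw [Tele.len_eq_three hsp]; omega)
          · intro hsp
            rw [show Tele.pos E S v i + 1 = Tele.pos E S v (i+1) from by
              rw [Tele.pos_succ, Tele.len_eq_one hsp]]
            exact Tele.W_pos E S v (i+1)
        have hRin : TeleEdge E S (Tele.W E S v (Tele.pos E S v i + 1)) (Sum.inl (v i)) →
            E (v (i+1)) (v i) := by
          intro hT
          by_cases hsp : Tele.spl E S v i = true
          · rw [hWnext.1 hsp] at hT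
            cases hdi : Tele.dir E v i with
            | true =>
              rw [Tele.seg_one_T hdi] at hT
              exact absurd hT (Tele.no_out_T E S _ _)
            | false =>
              rw [Tele.seg_one_R hdi] at hT
              obtain ⟨hs, _⟩ := Tele.R_inl E S hT
              exact hSE _ _ hs
          · rw [hWnext.2 (by simpa using hsp)] at hT
            exact Tele.inl_inl E S hT
        have hRout : TeleEdge E S (Sum.inl (v i)) (Tele.W E S v (Tele.pos E S v i + 1)) →
            E (v i) (v (i+1)) := by
          intro hT
          by_cases hsp : Tele.spl E S v i = true
          · rw [hWnext.1 hsp] at hT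
            cases hdi : Tele.dir E v i with
            | true =>
              rw [Tele.seg_one_T hdi] at hT
              obtain ⟨hs, _⟩ := Tele.inl_T E S hT
              exact hSE _ _ hs
            | false =>
              rw [Tele.seg_one_R hdi] at hT
              exact absurd hT (Tele.no_in_R E S _ _)
          · rw [hWnext.2 (by simpa using hsp)] at hT
            exact Tele.inl_inl E S hT
        have hint : i < n := by
          rcases Nat.lt_or_ge i n with h | h
          · exact h
          · exact absurd (Tele.pos_mono E S v h) (by omega)
        rintro (⟨hm, hpat⟩ | ⟨hc1, hc2, hc3⟩)
        · rw [hWk] at hm hpat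
          have hv3 := Tele.inl_mem hm
          refine hnb i hi0 hint (Or.inl ⟨hv3, ?_⟩)
          rcases hpat with ⟨p1, p2⟩ | ⟨p1, p2⟩ | ⟨p1, p2⟩
          · exact Or.inl ⟨hLin p1, hRout p2⟩
          · exact Or.inr (Or.inl ⟨hRin p1, hLout p2⟩)
          · exact Or.inr (Or.inr ⟨hLout p1, hRout p2⟩)
        · rw [hWk] at hc1 hc2 hc3
          refine hnb i hi0 hint (Or.inr ⟨hLin hc1, hRin hc2, ?_⟩)
          intro u hdu hu
          rcases Tele.desc_transfer E S hdu with hinl | ⟨p, hp, hdp⟩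
          · exact hc3 (Sum.inl u) hinl (Or.inl ⟨u, hu, rfl⟩)
          · exact hc3 p hdp (Or.inr hp)
      · -- fresh vertex
        have hsp : Tele.spl E S v i = true := by
          by_contra hs
          rw [Tele.len_eq_one (by simpa using hs)] at hr
          omega
        have hS' := Tele.spl_true hsp
        have hr3 : r = 1 ∨ r = 2 := by
          rw [Tele.len_eq_three hsp] at hr; omega
        cases hdi : Tele.dir E v i with
        | true =>
          rw [Tele.eP_true hdi] at hS'
          rcases hr3 with rfl | rfl
          · rw [Tele.seg_one_T hdi] at hWk
            exact Tele.not_blockedAt_T E S V3 _ _ hS' hWk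
          · rw [Tele.seg_two_R hdi] at hWk
            exact Tele.not_blockedAt_R E S V3 _ _ hWk
        | false =>
          rw [Tele.eP_false hdi] at hS'
          rcases hr3 with rfl | rfl
          · rw [Tele.seg_one_R hdi] at hWk
            exact Tele.not_blockedAt_R E S V3 _ _ hWk
          · rw [Tele.seg_two_T hdi] at hWk
            exact Tele.not_blockedAt_T E S V3 _ _ hS' hWk
    -- assemble the path and contradict d-separation in H
    have hpath' : IsPathBetween (TeleEdge E S) (Sum.inl '' V1) (Sum.inl '' V2)
        (Tele.pos E S v n) (Tele.W E S v) := by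
      refine ⟨le_trans hn1 (Tele.le_pos E S v n), hWinj, ?_, ?_, hadj⟩
      · rw [show (0:ℕ) = Tele.pos E S v 0 from by simp [Tele.pos], Tele.W_pos]
        exact ⟨v 0, hv0, rfl⟩
      · rw [Tele.W_pos]
        exact ⟨v n, hvn, rfl⟩
    obtain ⟨k, hk0, hkn, hbk⟩ := hd _ _ hpath'
    exact hnblk k hk0 hkn hbk
  refine ⟨main, ?_⟩
  intro hp
  by_contra hds
  obtain ⟨S, hSE, hAc, hDs⟩ := hp
  exact main hds S hSE hAc hDs
end
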